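/- arXiv:1204.3869 — 5 statements merged into one kernel-verified Lean document; each statement's English description precedes it below -/
import Mathlib

section
/- Let 𝔅' ⊆ 𝔅(X) be nonempty with the forward exchange property, suppose X contains an element that is neither a loop nor a coloop, and let x be the first such element (smallest index). Assume 𝔅'_{∖x} := {B ∈ 𝔅' : x ∉ B} and 𝔅'_{|x} := {B ∈ 𝔅' : x ∈ B} are both nonempty, and set 𝔅'_{/x} := {π_x(B∖x) : B ∈ 𝔅'_{|x}}. Then the sequence 0 → 𝒫(X∖x, 𝔅'_{∖x}) → 𝒫(X,𝔅') → 𝒫(X/x, 𝔅'_{/x}) → 0 is exact, where the first map is multiplication by p_x and the second is the restriction of Sym(π_x): multiplication by p_x maps 𝒫(X∖x,𝔅'_{∖x}) injectively into 𝒫(X,𝔅'), Sym(π_x) maps 𝒫(X,𝔅') onto 𝒫(X/x,𝔅'_{/x}), and the kernel of Sym(π_x) restricted to 𝒫(X,𝔅') equals p_x·𝒫(X∖x,𝔅'_{∖x}). -/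
noncomputable section

variable {r N : ℕ}

/-- `p_u`, the degree-one polynomial associated with the vector `u ∈ ℝ^r`. -/
def linPoly {r : ℕ} (u : Fin r → ℝ) : MvPolynomial (Fin r) ℝ :=
  ∑ i, MvPolynomial.C (u i) * MvPolynomial.X i

/-- `p_Y = ∏_{i ∈ Y} p_{X i}` for a sublist `Y` of the list `X`. -/
def prodPoly {r N : ℕ} (X : Fin N → Fin r → ℝ) (Y : Finset (Fin N)) : MvPolynomial (Fin r) ℝ :=
  ∏ i ∈ Y, linPoly (X i)

/-- The pairing `⟨p, f⟩ = (p(∂/∂t₁,…,∂/∂t_r) f)(0)`, written via coefficients: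
`⟨p,f⟩ = ∑_α α! · p_α · f_α`. -/
def pairing {r : ℕ} (p f : MvPolynomial (Fin r) ℝ) : ℝ :=
  ∑ α ∈ p.support, (∏ i, ((α i).factorial : ℝ)) * p.coeff α * f.coeff α

lemma pairing_zero {r : ℕ} (q : MvPolynomial (Fin r) ℝ) : pairing q 0 = 0 := by
  simp [pairing]

lemma pairing_add {r : ℕ} (q f g : MvPolynomial (Fin r) ℝ) :
    pairing q (f + g) = pairing q f + pairing q g := by
  unfold pairing
  rw [← Finset.sum_add_distrib]
  exact Finset.sum_congr rfl fun α _ => by rw [MvPolynomial.coeff_add]; ring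

lemma pairing_smul {r : ℕ} (q : MvPolynomial (Fin r) ℝ) (c : ℝ) (f : MvPolynomial (Fin r) ℝ) :
    pairing q (c • f) = c * pairing q f := by
  unfold pairing
  rw [Finset.mul_sum]
  exact Finset.sum_congr rfl fun α _ => by rw [MvPolynomial.coeff_smul, smul_eq_mul]; ring

/-- The kernel (Macaulay inverse system) of an ideal `I`:
all polynomials annihilated (in the sense of the pairing) by every element of `I`. -/
def kerIdeal {r : ℕ} (I : Ideal (MvPolynomial (Fin r) ℝ)) :
    Submodule ℝ (MvPolynomial (Fin r) ℝ) where
  carrier := {f | ∀ q ∈ I, pairing q f = 0}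
  add_mem' := fun hf hg q hq => by
    rw [pairing_add, hf q hq, hg q hq, add_zero]
  zero_mem' := fun q _ => pairing_zero q
  smul_mem' := fun c f hf q hq => by
    rw [pairing_smul, hf q hq, mul_zero]

section Lists

variable {M : Type*} [AddCommGroup M] [Module ℝ M]

/-- `B ⊆ G` is (the index set of) a sublist of the list `v` restricted to the ground set `G`
that is a basis of the ambient space. -/
def basesOn (v : Fin N → M) (G : Finset (Fin N)) : Set (Finset (Fin N)) :=
  {B | B ⊆ G ∧ LinearIndependent ℝ ((B : Set (Fin N)).restrict v) ∧
    Submodule.span ℝ (v '' (B : Set (Fin N))) = ⊤}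

/-- `j` is externally active with respect to the basis `B`:
`v j ∈ span {v e : e ∈ B, e ≤ j}` and `j ∉ B`. -/
def isExtActive (v : Fin N → M) (B : Finset (Fin N)) (j : Fin N) : Prop :=
  j ∉ B ∧ v j ∈ Submodule.span ℝ (v '' {e : Fin N | e ∈ B ∧ e ≤ j})

open Classical in
/-- The set `E(B)` of externally active elements (within the ground set `G`). -/
def extSetOn (v : Fin N → M) (G B : Finset (Fin N)) : Finset (Fin N) :=
  G.filter (fun j => isExtActive v B j)

/-- `C` is a cocircuit w.r.t. the collection of bases `𝔅`: an inclusion-minimal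
sublist of the ground set `G` intersecting every basis in `𝔅`. -/
def isCocircuitOn (G : Finset (Fin N)) (𝔅 : Set (Finset (Fin N))) (C : Finset (Fin N)) : Prop :=
  C ⊆ G ∧ (∀ B ∈ 𝔅, (C ∩ B).Nonempty) ∧
    ∀ C' ⊆ C, (∀ B ∈ 𝔅, (C' ∩ B).Nonempty) → C' = C

/-- A set of bases `𝔅` of the list `v` has the forward exchange property. -/
def forwardExchange (v : Fin N → M) (𝔅 : Set (Finset (Fin N))) : Prop :=
  ∀ B ∈ 𝔅, ∀ b ∈ B, ∀ j : Fin N,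
    v j ∈ Submodule.span ℝ (v '' {e : Fin N | e ∈ B ∧ e ≤ b}) →
    v j ∉ Submodule.span ℝ (v '' {e : Fin N | e ∈ B ∧ e < b}) →
    ¬ isExtActive v B j →
    insert j (B.erase b) ∈ 𝔅

end Lists

/-- The ideal `𝒥` generated by the cocircuit polynomials `p_C`. -/
def Jideal (X : Fin N → Fin r → ℝ) (G : Finset (Fin N)) (𝔅 : Set (Finset (Fin N))) :
    Ideal (MvPolynomial (Fin r) ℝ) :=
  Ideal.span {p | ∃ C : Finset (Fin N), isCocircuitOn G 𝔅 C ∧ p = prodPoly X C}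

/-- The generalised `𝒟`-space: the kernel of the cocircuit ideal. -/
def Dspace (X : Fin N → Fin r → ℝ) (G : Finset (Fin N)) (𝔅 : Set (Finset (Fin N))) :
    Submodule ℝ (MvPolynomial (Fin r) ℝ) :=
  kerIdeal (Jideal X G 𝔅)

/-- `Q_B := p_{X∖(B ∪ E(B))}` (within the ground set `G`). -/
def QB (X : Fin N → Fin r → ℝ) (G B : Finset (Fin N)) : MvPolynomial (Fin r) ℝ :=
  prodPoly X (G \ (B ∪ extSetOn X G B))

/-- The central `𝒫`-space: the span of `p_Y` over sublists `Y` of `G` whose complement spans. -/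
def PspaceOn (X : Fin N → Fin r → ℝ) (G : Finset (Fin N)) :
    Submodule ℝ (MvPolynomial (Fin r) ℝ) :=
  Submodule.span ℝ {p | ∃ Y : Finset (Fin N), Y ⊆ G ∧
    Submodule.span ℝ (X '' ((G \ Y : Finset (Fin N)) : Set (Fin N))) = ⊤ ∧ p = prodPoly X Y}

/-- The generalised `𝒫`-space `𝒫(X,𝔅') = span {Q_B : B ∈ 𝔅'}`. -/
def PspaceB (X : Fin N → Fin r → ℝ) (G : Finset (Fin N)) (𝔅 : Set (Finset (Fin N))) :
    Submodule ℝ (MvPolynomial (Fin r) ℝ) :=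
  Submodule.span ℝ {p | ∃ B ∈ 𝔅, p = QB X G B}

/-- The directional derivative `D_u = ∑ i, uᵢ ∂/∂tᵢ` as a linear map. -/
def dirDeriv {r : ℕ} (u : Fin r → ℝ) :
    MvPolynomial (Fin r) ℝ →ₗ[ℝ] MvPolynomial (Fin r) ℝ :=
  ∑ i, u i • (MvPolynomial.pderiv i).toLinearMap

end

/-- `𝒫(X/x, 𝔅'_{/x})`, realised inside `Sym(ℝ^r/ℝx) ≅ ℝ[s₁,…,s_r]/(p_x)`:
the span of the images of the polynomials `Q_{B'}` for `B' ∈ 𝔅'_{/x}`, where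
`Q_{B'} = p_{(X/x) ∖ (B' ∪ E(B'))}` with external activity computed in the
contracted list `π_x ∘ X` on the ground set `X∖x`. -/
noncomputable def PspaceContrB {r N : ℕ} (X : Fin N → Fin r → ℝ) (i0 : Fin N)
    (𝔅' : Set (Finset (Fin N))) :
    Submodule ℝ (MvPolynomial (Fin r) ℝ ⧸ Ideal.span {linPoly (X i0)}) :=
  Submodule.span ℝ {q | ∃ B' ∈ {C | ∃ B ∈ 𝔅', i0 ∈ B ∧ C = B.erase i0},
    q = Ideal.Quotient.mk (Ideal.span {linPoly (X i0)})
      (prodPoly X (Finset.univ.erase i0 \ (B' ∪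
        extSetOn ((Submodule.span ℝ {X i0}).mkQ ∘ X) (Finset.univ.erase i0) B')))}

/-!
Split the bases according to whether they contain `x`. A basis `B` avoiding `x` does not make `x`
externally active, hence `Q_B = p_x · Q_B^{X∖x}`. If `x ∈ B`, the elements before `x`
outside `B` are loops, so contraction does not change external activity and
`Sym(π_x) Q_B = Q_{B/x}`. This describes both maps on generators. For the kernel, `Sym(π_x)` is
injective on the span of the `Q_B` with `x ∈ B` because the `Q_{B/x}` are linearly independent: the
`Q_B` over all bases of any list are independent, by induction on the length of the list through
the same deletion–contraction split.
-/

open MvPolynomial Submodule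

section Polynomials

variable {r N : ℕ}

lemma linPoly_coeff_single (u : Fin r → ℝ) (i : Fin r) :
    (linPoly u).coeff (Finsupp.single i 1) = u i := by
  simp only [linPoly, coeff_sum, coeff_C_mul, coeff_X]
  rw [Finset.sum_eq_single i (fun j _ hj => by simp [Finsupp.single_left_inj one_ne_zero, hj])
    (by simp)]
  simp

lemma linPoly_ne_zero {u : Fin r → ℝ} (hu : u ≠ 0) : linPoly u ≠ 0 :=
  fun h => hu <| funext fun i => by simpa [h] using (linPoly_coeff_single u i).symm

@[simp]
lemma linPoly_zero : linPoly (0 : Fin r → ℝ) = 0 := by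
  simp [linPoly]

lemma linPoly_smul (c : ℝ) (u : Fin r → ℝ) : linPoly (c • u) = C c * linPoly u := by
  simp [linPoly, Finset.mul_sum, mul_assoc]

lemma linPoly_sum {ι : Type*} (s : Finset ι) (f : ι → Fin r → ℝ) :
    linPoly (∑ j ∈ s, f j) = ∑ j ∈ s, linPoly (f j) := by
  simp only [linPoly, Finset.sum_apply, map_sum, Finset.sum_mul]
  exact Finset.sum_comm

lemma prodPoly_insert (X : Fin N → Fin r → ℝ) {Y : Finset (Fin N)} {x : Fin N} (hx : x ∉ Y) :
    prodPoly X (insert x Y) = linPoly (X x) * prodPoly X Y :=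
  Finset.prod_insert hx

/-- `Sym(F)`. With `ker F = ℝx` it replaces `Sym(π_x)`, so that the contracted list `F ∘ X` is
again a list in `ℝ^r` and its polynomials live in the same ring. -/
noncomputable def symHom (F : (Fin r → ℝ) →ₗ[ℝ] (Fin r → ℝ)) :
    MvPolynomial (Fin r) ℝ →ₐ[ℝ] MvPolynomial (Fin r) ℝ :=
  aeval fun i => linPoly (F (Pi.single i 1))

lemma symHom_linPoly (F : (Fin r → ℝ) →ₗ[ℝ] (Fin r → ℝ)) (u : Fin r → ℝ) :
    symHom F (linPoly u) = linPoly (F u) := by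
  have hFu : F u = ∑ i, u i • F (Pi.single i 1) := by
    simp_rw [← map_smul, ← map_sum]
    congr 1
    ext j
    simp [Pi.single_apply]
  rw [hFu, linPoly_sum]
  simp only [linPoly_smul]
  simp [symHom, linPoly]

lemma symHom_prodPoly (F : (Fin r → ℝ) →ₗ[ℝ] (Fin r → ℝ)) (X : Fin N → Fin r → ℝ)
    (Y : Finset (Fin N)) : symHom F (prodPoly X Y) = prodPoly (F ∘ X) Y := by
  simp [prodPoly, symHom_linPoly]

lemma span_singleton_le_ker_symHom {F : (Fin r → ℝ) →ₗ[ℝ] (Fin r → ℝ)} {u : Fin r → ℝ}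
    (hu : F u = 0) : Ideal.span {linPoly u} ≤ RingHom.ker (symHom F) := by
  simp [symHom_linPoly, hu]

end Polynomials

lemma exists_linearMap_ker_eq {K V : Type*} [DivisionRing K] [AddCommGroup V] [Module K V]
    (W : Submodule K V) : ∃ F : V →ₗ[K] V, LinearMap.ker F = W :=
  let ⟨q, hq⟩ := W.exists_isCompl
  ⟨q.projection W hq.symm, Submodule.ker_projection hq.symm⟩

lemma exists_mem_span_insert_exchange {K V ι : Type*} [DivisionRing K] [AddCommGroup V]
    [Module K V] [DecidableEq ι] (v : ι → V) {w : V} (hw0 : w ≠ 0) {T : Finset ι}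
    (hw : w ∈ span K (v '' T)) : ∃ e ∈ T, v e ∈ span K (insert w (v '' ↑(T.erase e))) := by
  induction T using Finset.induction_on with
  | empty => simp_all
  | insert a T haT ih =>
    by_cases hwT : w ∈ span K (v '' T)
    · obtain ⟨e, heT, he⟩ := ih hwT
      refine ⟨e, Finset.mem_insert_of_mem heT, span_mono (Set.insert_subset_insert ?_) he⟩
      exact Set.image_mono
        (Finset.coe_subset.2 (Finset.erase_subset_erase e (Finset.subset_insert a T)))
    · refine ⟨a, Finset.mem_insert_self a T, ?_⟩
      rw [Finset.erase_insert haT]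
      rw [Finset.coe_insert, Set.image_insert_eq] at hw
      exact mem_span_insert_exchange hw hwT

section Matroid

variable {N : ℕ} {M M₂ : Type*} [AddCommGroup M] [Module ℝ M] [AddCommGroup M₂] [Module ℝ M₂]
  {v : Fin N → M} {G B : Finset (Fin N)} {x e : Fin N}

def IsBasisIn (v : Fin N → M) (G B : Finset (Fin N)) : Prop :=
  B ⊆ G ∧ LinearIndepOn ℝ v (B : Set (Fin N)) ∧ span ℝ (v '' B) = span ℝ (v '' G)

def IsColoopIn (v : Fin N → M) (G : Finset (Fin N)) (e : Fin N) : Prop :=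
  span ℝ (v '' ↑(G.erase e)) ≠ span ℝ (v '' G)

lemma isBasisIn_univ_of_mem_basesOn (hv : span ℝ (Set.range v) = ⊤) (hB : B ∈ basesOn v .univ) :
    IsBasisIn v .univ B :=
  ⟨hB.1, hB.2.1, by rw [hB.2.2, Finset.coe_univ, Set.image_univ, hv]⟩

lemma isColoopIn_univ_iff (hv : span ℝ (Set.range v) = ⊤) :
    IsColoopIn v .univ e ↔ span ℝ (v '' ↑(Finset.univ.erase e)) ≠ ⊤ := by
  rw [IsColoopIn, Finset.coe_univ, Set.image_univ, hv]

lemma mem_extSetOn {j : Fin N} : j ∈ extSetOn v G B ↔ j ∈ G ∧ isExtActive v B j := by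
  simp [extSetOn]

lemma IsColoopIn.mem (hc : IsColoopIn v G e) (hB : IsBasisIn v G B) : e ∈ B := by
  by_contra heB
  refine hc (le_antisymm (span_mono (Set.image_mono (Finset.erase_subset e G))) ?_)
  rw [← hB.2.2]
  gcongr
  exact Finset.subset_erase.2 ⟨hB.1, heB⟩

lemma not_isColoopIn_of_mem_span (h : v e ∈ span ℝ (v '' ↑(G.erase e))) : ¬IsColoopIn v G e := by
  refine not_not.2 (le_antisymm (span_mono (Set.image_mono (Finset.erase_subset e G))) ?_)
  rw [span_le]
  rintro _ ⟨j, hj, rfl⟩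
  by_cases hje : j = e
  · exact hje ▸ h
  · exact subset_span ⟨j, Finset.mem_erase.2 ⟨hje, hj⟩, rfl⟩

lemma eq_zero_of_lt_of_notMem (hmin : ∀ j ∈ G, j < x → v j = 0 ∨ IsColoopIn v G j)
    (hB : IsBasisIn v G B) {j : Fin N} (hjG : j ∈ G) (hjx : j < x) (hjB : j ∉ B) : v j = 0 :=
  (hmin j hjG hjx).resolve_right fun hc => hjB (hc.mem hB)

/-- If `x` were externally active, some earlier basis element `e` could be exchanged for `x`,
so `e` would be neither a loop nor a coloop. -/
lemma not_isExtActive_of_forall_lt (hmin : ∀ j ∈ G, j < x → v j = 0 ∨ IsColoopIn v G j)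
    (hxG : x ∈ G) (hx0 : v x ≠ 0) (hBG : B ⊆ G) (hB : LinearIndepOn ℝ v (B : Set (Fin N))) :
    ¬isExtActive v B x := by
  rintro ⟨hxB, hx⟩
  have hT : {j | j ∈ B ∧ j ≤ x} = ↑(B.filter (· ≤ x)) := by ext; simp
  rw [hT] at hx
  obtain ⟨e, heT, he⟩ := exists_mem_span_insert_exchange v hx0 hx
  obtain ⟨heB, hex⟩ := Finset.mem_filter.1 heT
  have hlt : e < x := lt_of_le_of_ne hex fun h => hxB (h ▸ heB)
  have he' : v e ∈ span ℝ (v '' ↑(G.erase e)) := by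
    have hsub : insert (v x) (v '' ↑((B.filter (· ≤ x)).erase e)) ⊆ v '' ↑(G.erase e) :=
      Set.insert_subset_iff.2 ⟨⟨x, Finset.mem_erase.2 ⟨hlt.ne', hxG⟩, rfl⟩,
        Set.image_mono (Finset.coe_subset.2
          (Finset.erase_subset_erase e ((Finset.filter_subset _ B).trans hBG)))⟩
    exact span_mono hsub he
  rcases hmin e (hBG heB) hlt with h | h
  · exact hB.ne_zero heB h
  · exact not_isColoopIn_of_mem_span he' h

lemma sdiff_union_extSetOn_eq_insert (hxG : x ∈ G) (hxB : x ∉ B) (hx : ¬isExtActive v B x) :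
    G \ (B ∪ extSetOn v G B) = insert x (G.erase x \ (B ∪ extSetOn v (G.erase x) B)) := by
  ext j
  by_cases hjx : j = x
  · subst hjx
    simp [extSetOn, hxG, hxB, hx]
  · simp [extSetOn, hjx]

lemma IsBasisIn.erase (hB : IsBasisIn v G B) (hxB : x ∉ B) (hxc : ¬IsColoopIn v G x) :
    IsBasisIn v (G.erase x) B :=
  ⟨Finset.subset_erase.2 ⟨hB.1, hxB⟩, hB.2.1, hB.2.2.trans (not_not.1 hxc).symm⟩

variable {π : M →ₗ[ℝ] M₂}

lemma map_mem_span_image_comp_iff (hπ : LinearMap.ker π = span ℝ {v x}) (S : Set (Fin N))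
    (w : M) : π w ∈ span ℝ ((π ∘ v) '' S) ↔ w ∈ span ℝ (v '' S) ⊔ span ℝ {v x} := by
  rw [Set.image_comp, span_image, ← hπ, ← comap_map_eq, mem_comap]

lemma isExtActive_comp_erase_iff (hπ : LinearMap.ker π = span ℝ {v x}) (hxB : x ∈ B)
    (hloops : ∀ j ∈ G, j < x → j ∉ B → v j = 0) {j : Fin N} (hjG : j ∈ G) (hjB : j ∉ B) :
    isExtActive (π ∘ v) (B.erase x) j ↔ isExtActive v B j := by
  have hjB' : j ∉ B.erase x := fun h => hjB (Finset.mem_of_mem_erase h)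
  simp only [isExtActive, hjB, hjB', not_false_eq_true, true_and]
  rcases lt_or_ge j x with hjx | hxj
  · simp [hloops j hjG hjx hjB, zero_mem]
  have hset : {e | e ∈ B ∧ e ≤ j} = insert x {e | e ∈ B.erase x ∧ e ≤ j} := by
    ext e
    by_cases hex : e = x <;> simp_all
  rw [Function.comp_apply, map_mem_span_image_comp_iff hπ, hset, Set.image_insert_eq, span_insert,
    sup_comm]

lemma erase_sdiff_union_extSetOn_comp (hπ : LinearMap.ker π = span ℝ {v x}) (hxB : x ∈ B)
    (hloops : ∀ j ∈ G, j < x → j ∉ B → v j = 0) :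
    G.erase x \ (B.erase x ∪ extSetOn (π ∘ v) (G.erase x) (B.erase x)) =
      G \ (B ∪ extSetOn v G B) := by
  ext j
  by_cases hjx : j = x
  · simp [hjx, hxB]
  by_cases hjB : j ∈ B
  · simp [hjB, hjx]
  by_cases hjG : j ∈ G
  · simp [extSetOn, hjx, hjB, hjG, isExtActive_comp_erase_iff hπ hxB hloops hjG hjB]
  · simp [hjG]

lemma span_image_comp_erase (hπ : LinearMap.ker π = span ℝ {v x}) (C : Finset (Fin N)) :
    span ℝ ((π ∘ v) '' ↑(C.erase x)) = (span ℝ (v '' C)).map π := by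
  rw [Set.image_comp, span_image]
  refine le_antisymm (map_mono (span_mono (Set.image_mono (Finset.erase_subset x C)))) ?_
  rw [map_le_iff_le_comap, comap_map_eq, hπ, span_le]
  rintro _ ⟨j, hj, rfl⟩
  by_cases hjx : j = x
  · rw [hjx]
    exact mem_sup_right (mem_span_singleton_self (v x))
  · exact mem_sup_left (subset_span ⟨j, Finset.mem_erase.2 ⟨hjx, hj⟩, rfl⟩)

lemma IsBasisIn.comp_erase (hB : IsBasisIn v G B) (hxB : x ∈ B)
    (hπ : LinearMap.ker π = span ℝ {v x}) : IsBasisIn (π ∘ v) (G.erase x) (B.erase x) := by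
  obtain ⟨hBG, hind, hspan⟩ := hB
  rw [← Finset.insert_erase hxB, Finset.coe_insert,
    linearIndepOn_insert (by simp)] at hind
  have hx0 : v x ≠ 0 := fun h => hind.2 (h ▸ zero_mem _)
  have hdisj : Disjoint (span ℝ (v '' ↑(B.erase x))) (LinearMap.ker π) := by
    rw [hπ, disjoint_span_singleton' hx0]
    exact hind.2
  refine ⟨Finset.erase_subset_erase x hBG,
    hind.1.map_injOn π (LinearMap.injOn_of_disjoint_ker le_rfl hdisj), ?_⟩
  rw [span_image_comp_erase hπ, span_image_comp_erase hπ, hspan]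

end Matroid

lemma LinearIndepOn.disjoint_span_image_ker {ι R M M' : Type*} [Ring R] [AddCommGroup M]
    [Module R M] [AddCommGroup M'] [Module R M'] {v : ι → M} {s : Set ι} {f : M →ₗ[R] M'}
    (h : LinearIndepOn R (f ∘ v) s) : Disjoint (span R (v '' s)) (LinearMap.ker f) := by
  rw [Set.image_eq_range]
  exact Submodule.range_ker_disjoint h

section QB

variable {r N : ℕ} {v : Fin N → Fin r → ℝ} {G B : Finset (Fin N)} {x : Fin N}
  {F : (Fin r → ℝ) →ₗ[ℝ] (Fin r → ℝ)}

lemma QB_ne_zero (v : Fin N → Fin r → ℝ) (G B : Finset (Fin N)) : QB v G B ≠ 0 := by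
  refine Finset.prod_ne_zero_iff.2 fun j hj => linPoly_ne_zero fun h0 => ?_
  simp only [Finset.mem_sdiff, Finset.mem_union, not_or] at hj
  exact hj.2.2 (mem_extSetOn.2 ⟨hj.1, hj.2.1, by rw [h0]; exact zero_mem _⟩)

lemma QB_eq_linPoly_mul_QB_erase (hmin : ∀ j ∈ G, j < x → v j = 0 ∨ IsColoopIn v G j)
    (hxG : x ∈ G) (hx0 : v x ≠ 0) (hB : IsBasisIn v G B) (hxB : x ∉ B) :
    QB v G B = linPoly (v x) * QB v (G.erase x) B := by
  rw [QB, sdiff_union_extSetOn_eq_insert hxG hxB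
    (not_isExtActive_of_forall_lt hmin hxG hx0 hB.1 hB.2.1), prodPoly_insert, QB]
  simp

lemma symHom_QB (hF : LinearMap.ker F = span ℝ {v x})
    (hmin : ∀ j ∈ G, j < x → v j = 0 ∨ IsColoopIn v G j) (hB : IsBasisIn v G B) (hxB : x ∈ B) :
    symHom F (QB v G B) = QB (F ∘ v) (G.erase x) (B.erase x) := by
  rw [QB, symHom_prodPoly, QB, erase_sdiff_union_extSetOn_comp hF hxB
    fun j hjG hjx hjB => eq_zero_of_lt_of_notMem hmin hB hjG hjx hjB]

lemma linearIndepOn_symHom_comp_QB (hF : LinearMap.ker F = span ℝ {v x})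
    (hmin : ∀ j ∈ G, j < x → v j = 0 ∨ IsColoopIn v G j) {𝔅 : Set (Finset (Fin N))}
    (h𝔅 : ∀ B ∈ 𝔅, IsBasisIn v G B ∧ x ∈ B)
    (hcon : LinearIndepOn ℝ (QB (F ∘ v) (G.erase x)) {B | IsBasisIn (F ∘ v) (G.erase x) B}) :
    LinearIndepOn ℝ ((symHom F).toLinearMap ∘ QB v G) 𝔅 := by
  have hinj : Set.InjOn (·.erase x) 𝔅 := fun B₁ h₁ B₂ h₂ h => by
    rw [← Finset.insert_erase (h𝔅 B₁ h₁).2, ← Finset.insert_erase (h𝔅 B₂ h₂).2]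
    exact congrArg (insert x) h
  refine ((hcon.mono ?_).comp_of_image hinj).congr fun B hB =>
    (symHom_QB hF hmin (h𝔅 B hB).1 (h𝔅 B hB).2).symm
  rintro _ ⟨B, hB, rfl⟩
  exact (h𝔅 B hB).1.comp_erase (h𝔅 B hB).2 hF

lemma linearIndepOn_QB_of_forall_loop_or_coloop (h : ∀ e ∈ G, v e = 0 ∨ IsColoopIn v G e) :
    LinearIndepOn ℝ (QB v G) {B | IsBasisIn v G B} := by
  have hmem : ∀ B, IsBasisIn v G B → ∀ e, e ∈ B ↔ e ∈ G ∧ v e ≠ 0 := fun B hB e =>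
    ⟨fun he => ⟨hB.1 he, hB.2.1.ne_zero he⟩,
      fun ⟨heG, he0⟩ => ((h e heG).resolve_left he0).mem hB⟩
  have hsub : {B | IsBasisIn v G B}.Subsingleton := fun B₁ h₁ B₂ h₂ => by
    ext e
    rw [hmem B₁ h₁, hmem B₂ h₂]
  rcases hsub.eq_empty_or_singleton with h | ⟨B, h⟩ <;> rw [h]
  · exact linearIndepOn_empty ℝ _
  · exact LinearIndepOn.singleton (QB_ne_zero v G B)

lemma linearIndepOn_QB_of_erase (hF : LinearMap.ker F = span ℝ {v x})
    (hmin : ∀ j ∈ G, j < x → v j = 0 ∨ IsColoopIn v G j) (hxG : x ∈ G) (hx0 : v x ≠ 0)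
    (hxc : ¬IsColoopIn v G x)
    (hdel : LinearIndepOn ℝ (QB v (G.erase x)) {B | IsBasisIn v (G.erase x) B})
    (hcon : LinearIndepOn ℝ (QB (F ∘ v) (G.erase x)) {B | IsBasisIn (F ∘ v) (G.erase x) B}) :
    LinearIndepOn ℝ (QB v G) {B | IsBasisIn v G B} := by
  set 𝔅₁ := {B | IsBasisIn v G B ∧ x ∈ B}
  set 𝔅₂ := {B | IsBasisIn v G B ∧ x ∉ B}
  have hfac : Set.EqOn (fun B => linPoly (v x) * QB v (G.erase x) B) (QB v G) 𝔅₂ :=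
    fun B hB => (QB_eq_linPoly_mul_QB_erase hmin hxG hx0 hB.1 hB.2).symm
  have h₁ : LinearIndepOn ℝ ((symHom F).toLinearMap ∘ QB v G) 𝔅₁ :=
    linearIndepOn_symHom_comp_QB hF hmin (fun _ hB => hB) hcon
  have h₂ : LinearIndepOn ℝ (QB v G) 𝔅₂ :=
    ((hdel.mono fun B hB => hB.1.erase hB.2 hxc).map_injOn (LinearMap.mulLeft ℝ (linPoly (v x)))
      (mul_right_injective₀ (linPoly_ne_zero hx0)).injOn).congr hfac
  have hker : span ℝ (QB v G '' 𝔅₂) ≤ LinearMap.ker (symHom F).toLinearMap := by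
    rw [span_le]
    rintro _ ⟨B, hB, rfl⟩
    have hFx : F (v x) = 0 := LinearMap.mem_ker.1 (hF.ge (mem_span_singleton_self (v x)))
    simp [← hfac hB, symHom_linPoly, hFx]
  have hsplit : {B | IsBasisIn v G B} = 𝔅₁ ∪ 𝔅₂ := by
    ext B
    by_cases hxB : x ∈ B <;> simp [𝔅₁, 𝔅₂, hxB]
  rw [hsplit]
  exact (h₁.of_comp _).union h₂ (h₁.disjoint_span_image_ker.mono_right hker)

theorem linearIndepOn_QB (v : Fin N → Fin r → ℝ) (G : Finset (Fin N)) :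
    LinearIndepOn ℝ (QB v G) {B | IsBasisIn v G B} := by
  induction hn : G.card using Nat.strong_induction_on generalizing v G with
  | _ n ih =>
  by_cases h : ∃ x ∈ G, v x ≠ 0 ∧ ¬IsColoopIn v G x
  · classical
    obtain ⟨x, hx, hxmin⟩ := (G.filter fun x => v x ≠ 0 ∧ ¬IsColoopIn v G x).exists_min_image id
      (by simpa [Finset.filter_nonempty_iff] using h)
    obtain ⟨hxG, hx0, hxc⟩ := Finset.mem_filter.1 hx
    have hmin : ∀ j ∈ G, j < x → v j = 0 ∨ IsColoopIn v G j := fun j hjG hjx => by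
      by_contra hj
      rw [not_or] at hj
      exact (hxmin j (Finset.mem_filter.2 ⟨hjG, hj⟩)).not_gt hjx
    obtain ⟨F, hF⟩ := exists_linearMap_ker_eq (span ℝ {v x})
    have hlt : (G.erase x).card < n := hn ▸ Finset.card_erase_lt_of_mem hxG
    exact linearIndepOn_QB_of_erase hF hmin hxG hx0 hxc (ih _ hlt v _ rfl) (ih _ hlt (F ∘ v) _ rfl)
  · simp only [not_exists, not_and, not_not] at h
    exact linearIndepOn_QB_of_forall_loop_or_coloop fun e he => or_iff_not_imp_left.2 (h e he)

end QB

section Pspace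

variable {r N : ℕ} {v : Fin N → Fin r → ℝ} {G : Finset (Fin N)} {x : Fin N}
  {𝔅 : Set (Finset (Fin N))}

lemma map_mulLeft_PspaceB_erase_le (hmin : ∀ j ∈ G, j < x → v j = 0 ∨ IsColoopIn v G j)
    (hxG : x ∈ G) (hx0 : v x ≠ 0) (h𝔅 : ∀ B ∈ 𝔅, IsBasisIn v G B) :
    (PspaceB v (G.erase x) {B ∈ 𝔅 | x ∉ B}).map (LinearMap.mulLeft ℝ (linPoly (v x))) ≤
      PspaceB v G 𝔅 := by
  rw [PspaceB, map_span, span_le]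
  rintro _ ⟨_, ⟨B, ⟨hB, hxB⟩, rfl⟩, rfl⟩
  exact subset_span ⟨B, hB, (QB_eq_linPoly_mul_QB_erase hmin hxG hx0 (h𝔅 B hB) hxB).symm⟩

lemma PspaceB_le_span_sup_map_mulLeft (hmin : ∀ j ∈ G, j < x → v j = 0 ∨ IsColoopIn v G j)
    (hxG : x ∈ G) (hx0 : v x ≠ 0) (h𝔅 : ∀ B ∈ 𝔅, IsBasisIn v G B) :
    PspaceB v G 𝔅 ≤ span ℝ (QB v G '' {B ∈ 𝔅 | x ∈ B}) ⊔
      (PspaceB v (G.erase x) {B ∈ 𝔅 | x ∉ B}).map (LinearMap.mulLeft ℝ (linPoly (v x))) := by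
  rw [PspaceB, span_le]
  rintro _ ⟨B, hB, rfl⟩
  by_cases hxB : x ∈ B
  · exact mem_sup_left (subset_span ⟨B, ⟨hB, hxB⟩, rfl⟩)
  · refine mem_sup_right ⟨QB v (G.erase x) B, subset_span ⟨B, ⟨hB, hxB⟩, rfl⟩, ?_⟩
    exact (QB_eq_linPoly_mul_QB_erase hmin hxG hx0 (h𝔅 B hB) hxB).symm

lemma exists_eq_linPoly_mul_of_mem_PspaceB
    (hmin : ∀ j ∈ G, j < x → v j = 0 ∨ IsColoopIn v G j) (hxG : x ∈ G) (hx0 : v x ≠ 0)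
    (h𝔅 : ∀ B ∈ 𝔅, IsBasisIn v G B) {p : MvPolynomial (Fin r) ℝ} (hp : p ∈ PspaceB v G 𝔅)
    (hpx : p ∈ Ideal.span {linPoly (v x)}) :
    ∃ g ∈ PspaceB v (G.erase x) {B ∈ 𝔅 | x ∉ B}, p = linPoly (v x) * g := by
  obtain ⟨F, hF⟩ := exists_linearMap_ker_eq (span ℝ {v x})
  obtain ⟨p₁, hp₁, _, ⟨g, hg, rfl⟩, rfl⟩ :=
    mem_sup.1 (PspaceB_le_span_sup_map_mulLeft hmin hxG hx0 h𝔅 hp)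
  have hdisj := (linearIndepOn_symHom_comp_QB (𝔅 := {B ∈ 𝔅 | x ∈ B}) hF hmin
    (fun B hB => ⟨h𝔅 B hB.1, hB.2⟩) (linearIndepOn_QB _ _)).disjoint_span_image_ker
  have hp₁x : p₁ ∈ Ideal.span {linPoly (v x)} := by
    simpa using sub_mem hpx (Ideal.mul_mem_right g _ (Ideal.mem_span_singleton_self _))
  have hp₁F : symHom F p₁ = 0 :=
    span_singleton_le_ker_symHom (LinearMap.mem_ker.1 (hF.ge (mem_span_singleton_self (v x)))) hp₁x
  refine ⟨g, hg, ?_⟩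
  simp [disjoint_def.1 hdisj p₁ hp₁ hp₁F]

lemma map_mk_PspaceB_eq_PspaceContrB {X : Fin N → Fin r → ℝ} {i0 : Fin N}
    (hmin : ∀ j ∈ Finset.univ, j < i0 → X j = 0 ∨ IsColoopIn X .univ j) (hx0 : X i0 ≠ 0)
    (h𝔅 : ∀ B ∈ 𝔅, IsBasisIn X .univ B) :
    (PspaceB X .univ 𝔅).map (Ideal.Quotient.mkₐ ℝ (Ideal.span {linPoly (X i0)})).toLinearMap =
      PspaceContrB X i0 𝔅 := by
  have hcontr : ∀ B ∈ 𝔅, i0 ∈ B → QB X .univ B = prodPoly X (Finset.univ.erase i0 \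
      (B.erase i0 ∪ extSetOn ((span ℝ {X i0}).mkQ ∘ X) (Finset.univ.erase i0) (B.erase i0))) :=
    fun B hB hxB => by
      rw [QB, erase_sdiff_union_extSetOn_comp (ker_mkQ _) hxB
        fun j hjG hjx hjB => eq_zero_of_lt_of_notMem hmin (h𝔅 B hB) hjG hjx hjB]
  rw [PspaceB, map_span, PspaceContrB]
  refine le_antisymm (span_le.2 ?_) (span_le.2 ?_)
  · rintro _ ⟨_, ⟨B, hB, rfl⟩, rfl⟩
    by_cases hxB : i0 ∈ B
    · exact subset_span ⟨B.erase i0, ⟨B, hB, hxB, rfl⟩, by simp [hcontr B hB hxB]⟩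
    · simp [QB_eq_linPoly_mul_QB_erase hmin (Finset.mem_univ i0) hx0 (h𝔅 B hB) hxB,
        Ideal.Quotient.eq_zero_iff_mem.2 (Ideal.mem_span_singleton_self _)]
  · rintro _ ⟨_, ⟨B, hB, hxB, rfl⟩, rfl⟩
    exact subset_span ⟨QB X .univ B, ⟨B, hB, rfl⟩, by simp [hcontr B hB hxB]⟩

end Pspace

theorem statement14_general {r N : ℕ} (X : Fin N → Fin r → ℝ)
    (hX : Submodule.span ℝ (Set.range X) = ⊤)
    (𝔅' : Set (Finset (Fin N)))
    (hsub : 𝔅' ⊆ basesOn X Finset.univ)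
    (i0 : Fin N) (hloop : X i0 ≠ 0)
    (hmin : ∀ j : Fin N, j < i0 → X j = 0 ∨
      Submodule.span ℝ (X '' ((Finset.univ.erase j : Finset (Fin N)) : Set (Fin N))) ≠ ⊤) :
    (∀ p ∈ PspaceB X (Finset.univ.erase i0) {B ∈ 𝔅' | i0 ∉ B},
      linPoly (X i0) * p ∈ PspaceB X Finset.univ 𝔅') ∧
    (∀ p ∈ PspaceB X (Finset.univ.erase i0) {B ∈ 𝔅' | i0 ∉ B},
      linPoly (X i0) * p = 0 → p = 0) ∧
    (∀ p ∈ PspaceB X Finset.univ 𝔅',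
      Ideal.Quotient.mk (Ideal.span {linPoly (X i0)}) p ∈ PspaceContrB X i0 𝔅') ∧
    (∀ q ∈ PspaceContrB X i0 𝔅', ∃ p ∈ PspaceB X Finset.univ 𝔅',
      Ideal.Quotient.mk (Ideal.span {linPoly (X i0)}) p = q) ∧
    (∀ p ∈ PspaceB X Finset.univ 𝔅',
      (Ideal.Quotient.mk (Ideal.span {linPoly (X i0)}) p = 0 ↔
        ∃ g ∈ PspaceB X (Finset.univ.erase i0) {B ∈ 𝔅' | i0 ∉ B},
          p = linPoly (X i0) * g)) := by
  have h𝔅 : ∀ B ∈ 𝔅', IsBasisIn X .univ B := fun B hB => isBasisIn_univ_of_mem_basesOn hX (hsub hB)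
  have hmin' : ∀ j ∈ Finset.univ, j < i0 → X j = 0 ∨ IsColoopIn X .univ j := fun j _ hj => by
    rw [isColoopIn_univ_iff hX]
    exact hmin j hj
  have hx := Finset.mem_univ i0
  have hmk := map_mk_PspaceB_eq_PspaceContrB hmin' hloop h𝔅
  refine ⟨fun p hp => map_mulLeft_PspaceB_erase_le hmin' hx hloop h𝔅 (mem_map_of_mem hp),
    fun p _ hp => (mul_eq_zero.1 hp).resolve_left (linPoly_ne_zero hloop),
    fun p hp => hmk ▸ mem_map_of_mem hp, fun q hq => ?_, fun p hp => ⟨fun hp0 => ?_, ?_⟩⟩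
  · obtain ⟨p, hp, rfl⟩ := hmk.ge hq
    exact ⟨p, hp, rfl⟩
  · exact exists_eq_linPoly_mul_of_mem_PspaceB hmin' hx hloop h𝔅 hp
      (Ideal.Quotient.eq_zero_iff_mem.1 hp0)
  · rintro ⟨g, -, rfl⟩
    exact Ideal.Quotient.eq_zero_iff_mem.2
      (Ideal.mul_mem_right g _ (Ideal.mem_span_singleton_self _))

/-- deletion-contraction exact sequence
`0 → 𝒫(X∖x, 𝔅'_{∖x}) → 𝒫(X,𝔅') → 𝒫(X/x, 𝔅'_{/x}) → 0` (multiplication by `p_x`,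
then `Sym(π_x)`, realised as the quotient map `ℝ[s] → ℝ[s]/(p_x)`) for a forward
exchange set of bases `𝔅'` and `x` the first element of `X` that is neither a loop
nor a coloop (assuming restriction and deletion of `𝔅'` at `x` are nonempty). -/
theorem statement14 {r N : ℕ} (X : Fin N → Fin r → ℝ)
    (hX : Submodule.span ℝ (Set.range X) = ⊤)
    (𝔅' : Set (Finset (Fin N))) (hne : 𝔅'.Nonempty)
    (hsub : 𝔅' ⊆ basesOn X Finset.univ)
    (hfe : forwardExchange X 𝔅')
    (i0 : Fin N) (hloop : X i0 ≠ 0)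
    (hcoloop : Submodule.span ℝ
      (X '' ((Finset.univ.erase i0 : Finset (Fin N)) : Set (Fin N))) = ⊤)
    (hmin : ∀ j : Fin N, j < i0 → X j = 0 ∨
      Submodule.span ℝ (X '' ((Finset.univ.erase j : Finset (Fin N)) : Set (Fin N))) ≠ ⊤)
    (hdel : {B ∈ 𝔅' | i0 ∉ B}.Nonempty)
    (hres : {B ∈ 𝔅' | i0 ∈ B}.Nonempty) :
    (∀ p ∈ PspaceB X (Finset.univ.erase i0) {B ∈ 𝔅' | i0 ∉ B},
      linPoly (X i0) * p ∈ PspaceB X Finset.univ 𝔅') ∧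
    (∀ p ∈ PspaceB X (Finset.univ.erase i0) {B ∈ 𝔅' | i0 ∉ B},
      linPoly (X i0) * p = 0 → p = 0) ∧
    (∀ p ∈ PspaceB X Finset.univ 𝔅',
      Ideal.Quotient.mk (Ideal.span {linPoly (X i0)}) p ∈ PspaceContrB X i0 𝔅') ∧
    (∀ q ∈ PspaceContrB X i0 𝔅', ∃ p ∈ PspaceB X Finset.univ 𝔅',
      Ideal.Quotient.mk (Ideal.span {linPoly (X i0)}) p = q) ∧
    (∀ p ∈ PspaceB X Finset.univ 𝔅',
      (Ideal.Quotient.mk (Ideal.span {linPoly (X i0)}) p = 0 ↔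
        ∃ g ∈ PspaceB X (Finset.univ.erase i0) {B ∈ 𝔅' | i0 ∉ B},
          p = linPoly (X i0) * g)) :=
  statement14_general X hX 𝔅' hsub i0 hloop hmin
end

section
/- Let 𝔅' ⊆ 𝔅(X) be nonempty. For η ∈ ℝ^r∖{0}, define κ(η) := max over B ∈ 𝔅' of #{x ∈ X∖(B∪E(B)) : η·x ≠ 0}, and let ℐ(X,𝔅') ⊆ ℝ[t_1,…,t_r] be the ideal generated by {p̃_η^{κ(η)+1} : η ∈ ℝ^r∖{0}}. Then 𝒫(X,𝔅') ⊆ ker ℐ(X,𝔅'). -/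
/-!
Pairing `g * p̃_η ^ m` against `f` is pairing `g` against `D_η^m f`, where `D_η` is the
directional derivative along `η`. Now `Q_B` is a product of linear forms `p_x` with
`D_η p_x = η·x` a constant, so by the Leibniz rule each application of `D_η` removes one factor
with `η·x ≠ 0`. Only `#{x ∈ X∖(B∪E(B)) : η·x ≠ 0} ≤ κ(η)` such factors occur, so
`D_η^{κ(η)+1} Q_B = 0`: every generator of `ℐ(X,𝔅')` annihilates every `Q_B`.
-/

open MvPolynomial
open scoped Finset

namespace Derivation

variable {R A : Type*} [CommSemiring R] [CommSemiring A] [Algebra R A]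

theorem leibniz_prod {M : Type*} [AddCommMonoid M] [Module A M] [Module R M]
    (D : Derivation R A M) {ι : Type*} [DecidableEq ι] (ℓ : ι → A)
    (s : Finset ι) :
    D (∏ j ∈ s, ℓ j) = ∑ j ∈ s, (∏ i ∈ s.erase j, ℓ i) • D (ℓ j) := by
  induction s using Finset.induction_on with
  | empty => simp
  | insert a s ha ih =>
    have herase : ∀ j ∈ s, (insert a s).erase j = insert a (s.erase j) := fun j hj =>
      Finset.erase_insert_of_ne (ne_of_mem_of_not_mem hj ha).symm
    rw [Finset.prod_insert ha, leibniz, ih, Finset.sum_insert ha, Finset.erase_insert ha,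
      Finset.smul_sum, add_comm]
    congr 1
    refine Finset.sum_congr rfl fun j hj => ?_
    rw [herase j hj, Finset.prod_insert (fun h => ha (Finset.mem_of_mem_erase h)), mul_smul]

theorem pow_prod_eq_zero (D : Derivation R A A) {ι : Type*} [DecidableEq ι] [DecidableEq R]
    (ℓ : ι → A) (c : ι → R) (hD : ∀ j, D (ℓ j) = algebraMap R A (c j))
    (m : ℕ) (s : Finset ι) (hm : #{j ∈ s | c j ≠ 0} < m) :
    ((D : A →ₗ[R] A) ^ m) (∏ j ∈ s, ℓ j) = 0 := by
  induction m generalizing s with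
  | zero => exact absurd hm (Nat.not_lt_zero _)
  | succ m ih =>
    rw [pow_succ, Module.End.mul_apply, coeFn_coe, leibniz_prod, map_sum]
    refine Finset.sum_eq_zero fun j hj => ?_
    rw [hD, smul_eq_mul, ← Algebra.commutes, ← Algebra.smul_def, _root_.map_smul]
    by_cases hc : c j = 0
    · rw [hc, zero_smul]
    · have hjs : j ∈ ({j ∈ s | c j ≠ 0} : Finset ι) := Finset.mem_filter.mpr ⟨hj, hc⟩
      have hpos := Finset.card_pos.mpr ⟨j, hjs⟩
      rw [ih _ (by rw [Finset.filter_erase, Finset.card_erase_of_mem hjs]; omega), smul_zero]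

end Derivation

variable {r : ℕ}

noncomputable def dirDerivation (η : Fin r → ℝ) :
    Derivation ℝ (MvPolynomial (Fin r) ℝ) (MvPolynomial (Fin r) ℝ) :=
  ∑ i, η i • pderiv i

theorem dirDerivation_apply (η : Fin r → ℝ) (f : MvPolynomial (Fin r) ℝ) :
    dirDerivation η f = ∑ i, η i • pderiv i f := by
  change Derivation.coeFnAddMonoidHom (∑ i, η i • pderiv i) f = _
  rw [map_sum, Finset.sum_apply]
  rfl

theorem coe_dirDerivation (η : Fin r → ℝ) :
    (dirDerivation η : MvPolynomial (Fin r) ℝ →ₗ[ℝ] MvPolynomial (Fin r) ℝ) = dirDeriv η := by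
  refine LinearMap.ext fun f => ?_
  rw [Derivation.coeFn_coe, dirDerivation_apply, dirDeriv]
  simp

theorem dirDerivation_linPoly (η u : Fin r → ℝ) :
    dirDerivation η (linPoly u) = algebraMap ℝ _ (η ⬝ᵥ u) := by
  simp [dirDerivation_apply, linPoly, pderiv_X, dotProduct, Pi.single_apply, smul_eq_C_mul]
  exact Finset.sum_congr rfl fun _ _ => mul_comm _ _

theorem pairing_comm (p f : MvPolynomial (Fin r) ℝ) : pairing p f = pairing f p := by
  classical
  have hsum : ∀ g h : MvPolynomial (Fin r) ℝ, pairing g h =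
      ∑ α ∈ g.support ∪ h.support, (∏ i, ((α i).factorial : ℝ)) * g.coeff α * h.coeff α :=
    fun g h => Finset.sum_subset Finset.subset_union_left fun α _ hα => by
      rw [notMem_support_iff.mp hα, mul_zero, zero_mul]
  rw [hsum, hsum, Finset.union_comm]
  exact Finset.sum_congr rfl fun _ _ => by ring

theorem pairing_add_left (p q f : MvPolynomial (Fin r) ℝ) :
    pairing (p + q) f = pairing p f + pairing q f := by
  simp only [pairing_comm _ f, pairing_add]

theorem pairing_smul_left (c : ℝ) (p f : MvPolynomial (Fin r) ℝ) :
    pairing (c • p) f = c * pairing p f := by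
  simp only [pairing_comm _ f, pairing_smul]

theorem pairing_sum_right {ι : Type*} (q : MvPolynomial (Fin r) ℝ) (s : Finset ι)
    (f : ι → MvPolynomial (Fin r) ℝ) :
    pairing q (∑ i ∈ s, f i) = ∑ i ∈ s, pairing q (f i) := by
  classical
  induction s using Finset.induction_on with
  | empty => simp [pairing_zero]
  | insert _ _ h ih => rw [Finset.sum_insert h, Finset.sum_insert h, pairing_add, ih]

theorem pairing_sum_left {ι : Type*} (s : Finset ι) (p : ι → MvPolynomial (Fin r) ℝ)
    (f : MvPolynomial (Fin r) ℝ) :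
    pairing (∑ i ∈ s, p i) f = ∑ i ∈ s, pairing (p i) f := by
  simp only [pairing_comm _ f, pairing_sum_right]

theorem pairing_monomial_right (q : MvPolynomial (Fin r) ℝ) (β : Fin r →₀ ℕ) (c : ℝ) :
    pairing q (monomial β c) = (∏ i, ((β i).factorial : ℝ)) * q.coeff β * c := by
  unfold pairing
  rw [Finset.sum_eq_single β]
  · rw [coeff_monomial, if_pos rfl]
  · intro α _ hne
    rw [coeff_monomial, if_neg (fun h => hne h.symm), mul_zero]
  · intro h
    rw [notMem_support_iff.mp h, mul_zero, zero_mul]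

theorem prod_factorial_eq_mul_prod_factorial_tsub_single (β : Fin r →₀ ℕ) {i : Fin r}
    (hi : β i ≠ 0) :
    (∏ j, ((β j).factorial : ℝ)) =
      β i * ∏ j, (((β - Finsupp.single i 1 : Fin r →₀ ℕ) j).factorial : ℝ) := by
  classical
  have hcompl : ∀ j ∈ ({i}ᶜ : Finset (Fin r)),
      (((β - Finsupp.single i 1 : Fin r →₀ ℕ) j).factorial : ℝ) = (β j).factorial := fun j hj => by
    rw [Finsupp.tsub_apply, Finsupp.single_eq_of_ne (by simpa using hj), Nat.sub_zero]
  rw [Fintype.prod_eq_mul_prod_compl i, Fintype.prod_eq_mul_prod_compl i,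
    Finset.prod_congr rfl hcompl, ← mul_assoc, Finsupp.tsub_apply, Finsupp.single_eq_same,
    ← Nat.cast_mul, Nat.mul_factorial_pred hi]

theorem pairing_mul_X (g f : MvPolynomial (Fin r) ℝ) (i : Fin r) :
    pairing (g * X i) f = pairing g (pderiv i f) := by
  classical
  induction f using MvPolynomial.induction_on' with
  | add p q hp hq => rw [map_add, pairing_add, pairing_add, hp, hq]
  | monomial β c =>
    rw [pderiv_monomial, pairing_monomial_right, pairing_monomial_right, coeff_mul_X']
    by_cases hi : β i = 0
    · simp [hi]
    · rw [if_pos (Finsupp.mem_support_iff.mpr hi),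
        prod_factorial_eq_mul_prod_factorial_tsub_single β hi]
      ring

theorem pairing_mul_linPoly (η : Fin r → ℝ) (g f : MvPolynomial (Fin r) ℝ) :
    pairing (g * linPoly η) f = pairing g (dirDeriv η f) := by
  have hmul : g * linPoly η = ∑ i, η i • (g * X i) := by
    rw [linPoly, Finset.mul_sum]
    exact Finset.sum_congr rfl fun i _ => by rw [smul_eq_C_mul]; ring
  rw [hmul, pairing_sum_left, ← coe_dirDerivation, Derivation.coeFn_coe, dirDerivation_apply,
    pairing_sum_right]
  exact Finset.sum_congr rfl fun i _ => by rw [pairing_smul_left, pairing_smul, pairing_mul_X]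

theorem pairing_mul_linPoly_pow (η : Fin r → ℝ) (m : ℕ) (g f : MvPolynomial (Fin r) ℝ) :
    pairing (g * linPoly η ^ m) f = pairing g ((dirDeriv η ^ m) f) := by
  induction m generalizing g with
  | zero => simp
  | succ m ih =>
    rw [pow_succ', ← mul_assoc, ih, pairing_mul_linPoly, pow_succ', Module.End.mul_apply]

theorem mem_kerIdeal_span_of_pairing_mul_eq_zero {S : Set (MvPolynomial (Fin r) ℝ)}
    {f : MvPolynomial (Fin r) ℝ} (h : ∀ q ∈ S, ∀ g, pairing (g * q) f = 0) :
    f ∈ kerIdeal (Ideal.span S) := by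
  suffices hI : ∀ q ∈ Ideal.span S, ∀ g, pairing (g * q) f = 0 from
    fun q hq => by simpa using hI q hq 1
  intro q hq
  induction hq using Submodule.span_induction with
  | mem q hq => exact h q hq
  | zero => intro g; rw [mul_zero, pairing_comm, pairing_zero]
  | add q q' _ _ ih ih' => intro g; rw [mul_add, pairing_add_left, ih, ih', add_zero]
  | smul a q _ ih => intro g; rw [smul_eq_mul, ← mul_assoc]; exact ih _

theorem statement15_general {r N : ℕ} (X : Fin N → Fin r → ℝ)
    (𝔅' : Set (Finset (Fin N))) :
    PspaceB X Finset.univ 𝔅' ≤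
      kerIdeal (Ideal.span {q : MvPolynomial (Fin r) ℝ | ∃ η : Fin r → ℝ, η ≠ 0 ∧
        q = linPoly η ^
          (sSup {m : ℕ | ∃ B ∈ 𝔅', m = Set.ncard
              {j : Fin N | j ∉ B ∪ extSetOn X Finset.univ B ∧
                (∑ k, η k * X j k) ≠ 0}} + 1)}) := by
  refine Submodule.span_le.mpr ?_
  rintro _ ⟨B, hB, rfl⟩
  refine mem_kerIdeal_span_of_pairing_mul_eq_zero ?_
  rintro _ ⟨η, -, rfl⟩ g
  rw [pairing_mul_linPoly_pow, ← coe_dirDerivation, QB, prodPoly,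
    Derivation.pow_prod_eq_zero _ _ (fun j => ∑ k, η k * X j k)
      (fun j => dirDerivation_linPoly η (X j)), pairing_zero]
  refine Nat.lt_succ_of_le (le_csSup ⟨N, ?_⟩ ⟨B, hB, ?_⟩)
  · rintro _ ⟨B', -, rfl⟩
    simpa using Set.ncard_le_card (α := Fin N) _
  · rw [← Set.ncard_coe_finset]
    congr
    ext j
    simp

/-- `𝒫(X,𝔅') ⊆ ker ℐ(X,𝔅')` for the power ideal with exponents
`κ(η) + 1`, `κ(η) = max_{B ∈ 𝔅'} #{x ∈ X∖(B∪E(B)) : η·x ≠ 0}`. -/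
theorem statement15 {r N : ℕ} (X : Fin N → Fin r → ℝ)
    (hX : Submodule.span ℝ (Set.range X) = ⊤)
    (𝔅' : Set (Finset (Fin N))) (hne : 𝔅'.Nonempty)
    (hsub : 𝔅' ⊆ basesOn X Finset.univ) :
    PspaceB X Finset.univ 𝔅' ≤
      kerIdeal (Ideal.span {q : MvPolynomial (Fin r) ℝ | ∃ η : Fin r → ℝ, η ≠ 0 ∧
        q = linPoly η ^
          (sSup {m : ℕ | ∃ B ∈ 𝔅', m = Set.ncard
              {j : Fin N | j ∉ B ∪ extSetOn X Finset.univ B ∧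
                (∑ k, η k * X j k) ≠ 0}} + 1)}) :=
  statement15_general X 𝔅'
end

section
/- Let M be a matroid of rank r on a finite linearly ordered ground set A with set of bases 𝔅, and let 𝔅' ⊆ 𝔅 be nonempty with the forward exchange property. Then 𝔅' is placible. -/
/-- `x` is placeable in a collection `𝔅` of bases. -/
def placeableS {α : Type*} (x : α) (𝔅 : Set (Set α)) : Prop :=
  ∀ B ∈ 𝔅, ∃ b ∈ B, insert x (B \ {b}) ∈ 𝔅

/-- Placibility, defined by recursion on cardinality: a singleton is placible;
otherwise some element `x` of the ground set is placeable in `𝔅`, with both the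
restriction `𝔅_{|x}` and the deletion `𝔅_{∖x}` nonempty and placible. -/
inductive PlacibleS {α : Type*} (ground : Set α) : Set (Set α) → Prop where
  | singleton (B : Set α) : PlacibleS ground {B}
  | step (𝔅 : Set (Set α)) (x : α) (hx : x ∈ ground)
      (hpl : placeableS x 𝔅)
      (h1 : {B ∈ 𝔅 | x ∈ B}.Nonempty) (h2 : {B ∈ 𝔅 | x ∉ B}.Nonempty)
      (p1 : PlacibleS ground {B ∈ 𝔅 | x ∈ B}) (p2 : PlacibleS ground {B ∈ 𝔅 | x ∉ B}) :
      PlacibleS ground 𝔅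

/-- `x ∈ A ∖ B` is externally active with respect to `B`: `x ∈ cl {b ∈ B : b ≤ x}`. -/
def isExtActiveM {α : Type*} [LinearOrder α] (M : Matroid α) (B : Set α) (x : α) : Prop :=
  x ∈ M.E ∧ x ∉ B ∧ x ∈ M.closure {e ∈ B | e ≤ x}

/-- The forward exchange property for a set `𝔅'` of bases of an ordered matroid:
for every `B ∈ 𝔅'`, every `b ∈ B`, and every `x ∈ S_i^B ∖ (S_{i-1}^B ∪ E(B))`
(where `b` is the `i`-th smallest element of `B`, so that
`S_i^B = cl {e ∈ B : e ≤ b}` and `S_{i-1}^B = cl {e ∈ B : e < b}`),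
the set `(B ∖ {b}) ∪ {x}` belongs to `𝔅'`. -/
def forwardExchangeM {α : Type*} [LinearOrder α] (M : Matroid α) (𝔅 : Set (Set α)) : Prop :=
  ∀ B ∈ 𝔅, ∀ b ∈ B, ∀ x ∈ M.E,
    x ∈ M.closure {e ∈ B | e ≤ b} →
    x ∉ M.closure {e ∈ B | e < b} →
    ¬ isExtActiveM M B x →
    insert x (B \ {b}) ∈ 𝔅

/-!
Induct on `|𝔅|`. If `𝔅` is not a singleton, let `x` be the least element lying in some but not
every member of `𝔅`. Then `x` is placeable: for `B ∌ x` take the least `b ∈ B` with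
`x ∈ cl {e ∈ B | e ≤ b}`; `x` is not externally active, because the elements of `B` below `x` lie
in every member of `𝔅`, in particular in one containing `x`, which is independent. So forward
exchange puts `(B ∖ b) ∪ x` into `𝔅`. Finally `𝔅_{|x}` has the forward exchange property in `M`
(an exchange of `x` itself could only bring in an element below `x` separating `𝔅`), and `𝔅_{∖x}`
has it in `M ∖ x`.
-/

open Set
open scoped Matroid

lemma PlacibleS.mono_ground {α : Type*} {E₁ E₂ : Set α} (h : E₁ ⊆ E₂) {𝔅 : Set (Set α)}
    (hp : PlacibleS E₁ 𝔅) : PlacibleS E₂ 𝔅 := by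
  induction hp with
  | singleton B => exact .singleton B
  | step 𝔅 x hx hpl h1 h2 _ _ ih1 ih2 => exact .step 𝔅 x (h hx) hpl h1 h2 ih1 ih2

lemma Matroid.IsBase.isBase_delete_of_disjoint {α : Type*} {M : Matroid α} {B D : Set α}
    (hB : M.IsBase B) (hBD : Disjoint B D) : (M ＼ D).IsBase B :=
  Matroid.delete_isBase_iff.2 <| hB.isBasis_ground.isBasis_subset
    (subset_sdiff.2 ⟨hB.subset_ground, hBD⟩) sdiff_subset

section LinearOrder

variable {α : Type*} [LinearOrder α]

theorem Set.Finite.exists_mem_sep_le_and_not_sep_lt {B : Set α} (hB : B.Finite)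
    {P : Set α → Prop} (h0 : ¬ P ∅) (hP : P B) :
    ∃ b ∈ B, P {e ∈ B | e ≤ b} ∧ ¬ P {e ∈ B | e < b} := by
  classical
  lift B to Finset α using hB
  induction B using Finset.induction_on_max with
  | empty => exact absurd (by simpa using hP) h0
  | insert a s hlt ih =>
    rw [Finset.coe_insert] at hP ⊢
    by_cases hs : P s
    · obtain ⟨b, hb, h1, h2⟩ := ih hs
      have hba : b < a := hlt b hb
      refine ⟨b, mem_insert_of_mem _ hb, ?_, ?_⟩
      · convert h1 using 2; ext; grind
      · convert h2 using 2; ext; grind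
    · refine ⟨a, mem_insert _ _, ?_, ?_⟩
      · convert hP using 2; ext; grind
      · convert hs using 2; ext; grind

theorem Set.Nontrivial.exists_least_separating {E : Set α} (hE : E.Finite)
    {𝔅 : Set (Set α)} (h𝔅 : 𝔅.Nontrivial) (hsub : ∀ B ∈ 𝔅, B ⊆ E) :
    ∃ x, (∃ B ∈ 𝔅, x ∈ B) ∧ (∃ B ∈ 𝔅, x ∉ B) ∧
      ∀ a < x, ∀ B ∈ 𝔅, a ∈ B → ∀ B' ∈ 𝔅, a ∈ B' := by
  set D := {a | (∃ B ∈ 𝔅, a ∈ B) ∧ ∃ B ∈ 𝔅, a ∉ B}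
  have hD : D.Nonempty := by
    obtain ⟨B₁, hB₁, B₂, hB₂, hne⟩ := h𝔅
    obtain ⟨a, ha⟩ : ∃ a, ¬(a ∈ B₁ ↔ a ∈ B₂) := by
      by_contra! h
      exact hne (Set.ext h)
    by_cases h₁ : a ∈ B₁
    · exact ⟨a, ⟨B₁, hB₁, h₁⟩, B₂, hB₂, by tauto⟩
    · exact ⟨a, ⟨B₂, hB₂, by tauto⟩, B₁, hB₁, h₁⟩
  obtain ⟨x, hxD, hmin⟩ :=
    exists_min_image D id (hE.subset fun a ⟨⟨B, hB, haB⟩, _⟩ => hsub B hB haB) hD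
  refine ⟨x, hxD.1, hxD.2, fun a hax B hB haB B' hB' => ?_⟩
  by_contra haB'
  exact (hmin a ⟨⟨B, hB, haB⟩, B', hB', haB'⟩).not_gt hax

namespace Matroid

variable {M : Matroid α} {B : Set α} {b y : α}

lemma lt_of_mem_closure_sep_le_of_not_isExtActiveM (hy : y ∈ M.E) (hyB : y ∉ B)
    (hcl : y ∈ M.closure {e ∈ B | e ≤ b}) (hact : ¬ isExtActiveM M B y) : y < b := by
  refine lt_of_not_ge fun hby => hact ⟨hy, hyB, M.closure_subset_closure ?_ hcl⟩
  exact fun e he => ⟨he.1, he.2.trans hby⟩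

lemma Indep.eq_of_mem_closure_sep_le_of_notMem_closure_sep_lt (hB : M.Indep B) (hyB : y ∈ B)
    (h₁ : y ∈ M.closure {e ∈ B | e ≤ b}) (h₂ : y ∉ M.closure {e ∈ B | e < b}) : y = b := by
  rcases lt_trichotomy y b with hlt | heq | hgt
  · exact (h₂ (M.mem_closure_of_mem' ⟨hyB, hlt⟩ (hB.subset_ground hyB))).elim
  · exact heq
  · refine absurd (M.closure_subset_closure ?_ h₁) (hB.notMem_closure_sdiff_of_mem hyB)
    exact fun e he => ⟨he.1, (he.2.trans_lt hgt).ne⟩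

end Matroid

namespace forwardExchangeM

variable {M : Matroid α} {𝔅 : Set (Set α)} {x : α}

lemma sep_mem (hfe : forwardExchangeM M 𝔅) (hind : ∀ B ∈ 𝔅, M.Indep B)
    (hbelow : ∀ a < x, ∀ B ∈ 𝔅, a ∈ B → ∀ B' ∈ 𝔅, a ∈ B') :
    forwardExchangeM M {B ∈ 𝔅 | x ∈ B} := by
  rintro B ⟨hB, hxB⟩ b hb y hy h₁ h₂ h₃
  have hnew := hfe B hB b hb y hy h₁ h₂ h₃
  refine ⟨hnew, ?_⟩
  obtain rfl | hbx := eq_or_ne b x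
  · by_cases hyB : y ∈ B
    · rw [(hind B hB).eq_of_mem_closure_sep_le_of_notMem_closure_sep_lt hyB h₁ h₂]
      exact mem_insert _ _
    · exact absurd (hbelow y (Matroid.lt_of_mem_closure_sep_le_of_not_isExtActiveM hy hyB h₁ h₃) _
        hnew (mem_insert _ _) B hB) hyB
  · exact mem_insert_of_mem _ ⟨hxB, hbx.symm⟩

lemma delete (hfe : forwardExchangeM M 𝔅) (x : α) :
    forwardExchangeM (M ＼ {x}) {B ∈ 𝔅 | x ∉ B} := by
  rintro B ⟨hB, hxB⟩ b hb y ⟨hy, hyx⟩ h₁ h₂ h₃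
  have hdisj : ∀ S ⊆ B, Disjoint S {x} := fun S hS => disjoint_singleton_right.2 (hxB <| hS ·)
  rw [Matroid.delete_closure_eq_of_disjoint _ (hdisj _ (sep_subset _ _))] at h₁ h₂
  refine ⟨hfe B hB b hb y hy h₁.1 (fun h => h₂ ⟨h, hyx⟩) fun ⟨_, hyB, hcl⟩ => h₃ ?_, ?_⟩
  · exact ⟨⟨hy, hyx⟩, hyB, by
      rw [Matroid.delete_closure_eq_of_disjoint _ (hdisj _ (sep_subset _ _))]; exact ⟨hcl, hyx⟩⟩
  · rintro (h | ⟨h, -⟩)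
    · exact hyx h.symm
    · exact hxB h

end forwardExchangeM

lemma placeableS_of_forwardExchangeM {M : Matroid α} {B₁ : Set α} {𝔅 : Set (Set α)} {x : α}
    (hfin : M.E.Finite) (hfe : forwardExchangeM M 𝔅)
    (hsub : ∀ B ∈ 𝔅, M.IsBase B) (hB₁ : B₁ ∈ 𝔅) (hx₁ : x ∈ B₁)
    (hbelow : ∀ a < x, ∀ B ∈ 𝔅, a ∈ B → ∀ B' ∈ 𝔅, a ∈ B') : placeableS x 𝔅 := by
  have hxE : x ∈ M.E := (hsub B₁ hB₁).subset_ground hx₁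
  have hx : x ∉ M.closure (B₁ \ {x}) := (hsub B₁ hB₁).indep.notMem_closure_sdiff_of_mem hx₁
  intro B hB
  by_cases hxB : x ∈ B
  · exact ⟨x, hxB, by rwa [insert_sdiff_singleton, insert_eq_of_mem hxB]⟩
  obtain ⟨b, hb, h₁, h₂⟩ :=
    (hfin.subset (hsub B hB).subset_ground).exists_mem_sep_le_and_not_sep_lt
      (P := (x ∈ M.closure ·)) (fun h => hx (M.closure_subset_closure (empty_subset _) h))
      (by rwa [(hsub B hB).closure_eq])
  refine ⟨b, hb, hfe B hB b hb x hxE h₁ h₂ fun ⟨_, _, hcl⟩ => hx (M.closure_subset_closure ?_ hcl)⟩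
  rintro e ⟨heB, hex⟩
  have hlt : e < x := hex.lt_of_ne (by rintro rfl; exact hxB heB)
  exact ⟨hbelow e hlt B hB heB B₁ hB₁, hlt.ne⟩

end LinearOrder

theorem statement16_general {α : Type*} [LinearOrder α] (M : Matroid α) (hfin : M.E.Finite)
    (𝔅' : Set (Set α)) (hne : 𝔅'.Nonempty) (hsub : ∀ B ∈ 𝔅', M.IsBase B)
    (hfe : forwardExchangeM M 𝔅') :
    PlacibleS M.E 𝔅' := by
  induction hn : 𝔅'.ncard using Nat.strong_induction_on generalizing M 𝔅' with
  | _ n ih =>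
  obtain ⟨B, rfl⟩ | h𝔅 := hne.exists_eq_singleton_or_nontrivial
  · exact .singleton B
  have hsubE : ∀ B ∈ 𝔅', B ⊆ M.E := fun B hB => (hsub B hB).subset_ground
  obtain ⟨x, ⟨B₁, hB₁, hx₁⟩, ⟨B₀, hB₀, hx₀⟩, hbelow⟩ := h𝔅.exists_least_separating hfin hsubE
  have hcard : ∀ p : Set α → Prop, ∀ B ∈ 𝔅', ¬ p B → {B ∈ 𝔅' | p B}.ncard < n :=
    fun p B hB hpB => hn ▸ ncard_lt_ncard ⟨sep_subset _ _, fun h => hpB (h hB).2⟩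
      (hfin.finite_subsets.subset hsubE)
  refine .step 𝔅' x (hsubE B₁ hB₁ hx₁)
    (placeableS_of_forwardExchangeM hfin hfe hsub hB₁ hx₁ hbelow) ⟨B₁, hB₁, hx₁⟩ ⟨B₀, hB₀, hx₀⟩
    (ih _ (hcard _ B₀ hB₀ hx₀) M hfin _ ⟨B₁, hB₁, hx₁⟩ (fun B hB => hsub B hB.1)
      (hfe.sep_mem (fun B hB => (hsub B hB).indep) hbelow) rfl)
    (PlacibleS.mono_ground sdiff_subset <| ih _ (hcard _ B₁ hB₁ (not_not.2 hx₁)) (M ＼ {x})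
      hfin.sdiff _ ⟨B₀, hB₀, hx₀⟩
      (fun B hB => (hsub B hB.1).isBase_delete_of_disjoint (disjoint_singleton_right.2 hB.2))
      (hfe.delete x) rfl)

/-- a nonempty set of bases of an ordered matroid (finite ground set,
rank `r`) with the forward exchange property is placible. -/
theorem statement16 {α : Type*} [LinearOrder α] (M : Matroid α) (hfin : M.E.Finite)
    (r : ℕ) (hr : ∀ B, M.IsBase B → B.ncard = r)
    (𝔅' : Set (Set α)) (hne : 𝔅'.Nonempty) (hsub : ∀ B ∈ 𝔅', M.IsBase B)
    (hfe : forwardExchangeM M 𝔅') :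
    PlacibleS M.E 𝔅' :=
  statement16_general M hfin 𝔅' hne hsub hfe
end

section
/- Let A = (a_1,…,a_n) be an ordered list of vectors in ℝ^r and B_0 = (b_1,…,b_r) a basis of ℝ^r, and let X := (a_1,…,a_n,b_1,…,b_r) be the concatenation (all elements of A preceding those of B_0). For a linearly independent sublist I ⊆ A, define the greedy extension ex(I) by G_0 := I and, for j = 1,…,r, G_j := G_{j-1} ∪ {b_j} if b_j ∉ span(G_{j-1}), else G_j := G_{j-1}, and ex(I) := G_r. Then every ex(I) is a basis of ℝ^r, and the set of external bases 𝔅_+(A,B_0) := {ex(I) : I ⊆ A linearly independent} ⊆ 𝔅(X) has the forward exchange property (with respect to the order of X). -/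
open Classical in
/-- The greedy extension process: `G_0 := I` (viewed inside `Fin (n+r)`), and
`G_j := G_{j-1} ∪ {b_j}` if `b_j ∉ span(G_{j-1})`, else `G_j := G_{j-1}`. -/
noncomputable def greedyExt {n r : ℕ} (A : Fin n → Fin r → ℝ) (B0 : Fin r → Fin r → ℝ)
    (I : Finset (Fin n)) : ℕ → Finset (Fin (n + r))
  | 0 => I.map (Fin.castAddEmb r)
  | j + 1 =>
    if hj : j < r then
      if Fin.append A B0 (Fin.natAdd n ⟨j, hj⟩) ∉
          Submodule.span ℝ (Fin.append A B0 ''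
            ((greedyExt A B0 I j : Finset (Fin (n + r))) : Set (Fin (n + r)))) then
        insert (Fin.natAdd n ⟨j, hj⟩) (greedyExt A B0 I j)
      else greedyExt A B0 I j
    else greedyExt A B0 I j

/-!
The external bases are exactly the linearly independent sublists `B` of `X` in which every
element of `B₀` missing from `B` is externally active. The greedy extension produces such lists,
and conversely such a `B` is the greedy extension of `B ∩ A`: the vector `b_k` is added exactly
when it is not in the span of the earlier elements of `B`, i.e. when it is not externally active.

This class is closed under forward exchange. If `x ∈ S_i ∖ S_{i-1}` is not externally active
(and not already in `B`, where it must be `b'_i`), then `x` precedes `b'_i`, and the Steinitz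
exchange puts `b'_i` in the span of `x` and the elements of `B` before `b'_i`. Hence
`(B ∖ b'_i) ∪ x` is still independent, and `b'_i`, as well as every element that was externally
active for `B`, is externally active for it.
-/

open Submodule

theorem LinearIndepOn.notMem_span_image_of_subset {R M ι : Type*} [Ring R] [Nontrivial R]
    [AddCommGroup M] [Module R M] {v : ι → M} {s t : Set ι} {i : ι}
    (hv : LinearIndepOn R v s) (hi : i ∈ s) (hts : t ⊆ s) (hit : i ∉ t) :
    v i ∉ span R (v '' t) :=
  fun h ↦ hv.notMem_span hi <| span_mono
    (Set.image_mono fun _ he ↦ Set.mem_sdiff_singleton.2 ⟨hts he, ne_of_mem_of_not_mem he hit⟩) h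

section ForwardExchange

variable {M : Type*} [AddCommGroup M] [Module ℝ M] {N : ℕ} {v : Fin N → M}
  {B : Finset (Fin N)} {b j : Fin N}

theorem eq_of_mem_of_mem_span_le_of_notMem_span_lt (hB : LinearIndepOn ℝ v (B : Set (Fin N)))
    (hjB : j ∈ B) (h1 : v j ∈ span ℝ (v '' {e | e ∈ B ∧ e ≤ b}))
    (h2 : v j ∉ span ℝ (v '' {e | e ∈ B ∧ e < b})) : j = b := by
  rcases lt_trichotomy j b with hlt | heq | hgt
  · exact (h2 (subset_span ⟨j, ⟨hjB, hlt⟩, rfl⟩)).elim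
  · exact heq
  · exact absurd h1 (hB.notMem_span_image_of_subset hjB (fun e he ↦ he.1) fun h ↦ h.2.not_gt hgt)

theorem lt_of_not_isExtActive (hjB : j ∉ B) (h1 : v j ∈ span ℝ (v '' {e | e ∈ B ∧ e ≤ b}))
    (hj : ¬ isExtActive v B j) : j < b := by
  by_contra! hbj
  refine hj ⟨hjB, span_mono (Set.image_mono ?_) h1⟩
  exact fun e he ↦ ⟨he.1, he.2.trans hbj⟩

theorem mem_span_insert_of_mem_span_le_of_notMem_span_lt (hb : b ∈ B)
    (h1 : v j ∈ span ℝ (v '' {e | e ∈ B ∧ e ≤ b}))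
    (h2 : v j ∉ span ℝ (v '' {e | e ∈ B ∧ e < b})) :
    v b ∈ span ℝ (insert (v j) (v '' {e | e ∈ B ∧ e < b})) := by
  have hle : {e | e ∈ B ∧ e ≤ b} = insert b {e | e ∈ B ∧ e < b} := by
    ext e
    constructor
    · rintro ⟨he, hle⟩
      rcases hle.lt_or_eq with hlt | rfl
      exacts [Or.inr ⟨he, hlt⟩, Or.inl rfl]
    · rintro (rfl | ⟨he, hlt⟩)
      exacts [⟨hb, le_rfl⟩, ⟨he, hlt.le⟩]
  rw [hle, Set.image_insert_eq] at h1
  exact mem_span_insert_exchange h1 h2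

theorem mem_span_exchange_le (hb : b ∈ B) (hjb : j < b)
    (h1 : v j ∈ span ℝ (v '' {e | e ∈ B ∧ e ≤ b}))
    (h2 : v j ∉ span ℝ (v '' {e | e ∈ B ∧ e < b})) :
    v b ∈ span ℝ (v '' {e | e ∈ insert j (B.erase b) ∧ e ≤ b}) := by
  refine span_le.2 ?_ (mem_span_insert_of_mem_span_le_of_notMem_span_lt hb h1 h2)
  rintro _ (rfl | ⟨e, ⟨he, heb⟩, rfl⟩)
  · exact subset_span ⟨j, ⟨Finset.mem_insert_self _ _, hjb.le⟩, rfl⟩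
  · exact subset_span
      ⟨e, ⟨Finset.mem_insert_of_mem (Finset.mem_erase.2 ⟨heb.ne, he⟩), heb.le⟩, rfl⟩

theorem linearIndepOn_exchange (hB : LinearIndepOn ℝ v (B : Set (Fin N))) (hb : b ∈ B)
    (hjB : j ∉ B) (h1 : v j ∈ span ℝ (v '' {e | e ∈ B ∧ e ≤ b}))
    (h2 : v j ∉ span ℝ (v '' {e | e ∈ B ∧ e < b})) :
    LinearIndepOn ℝ v (insert j (B.erase b) : Finset (Fin N)) := by
  have hjB' : j ∉ (B.erase b : Set (Fin N)) := fun h ↦ hjB (Finset.mem_of_mem_erase h)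
  rw [Finset.coe_insert, linearIndepOn_insert hjB']
  refine ⟨hB.mono (Finset.coe_subset.2 (Finset.erase_subset b B)), fun hj ↦ ?_⟩
  refine hB.notMem_span_image_of_subset hb (Finset.coe_subset.2 (Finset.erase_subset b B))
    (by simp) (span_le.2 ?_ (mem_span_insert_of_mem_span_le_of_notMem_span_lt hb h1 h2))
  rintro _ (rfl | ⟨e, ⟨he, heb⟩, rfl⟩)
  · exact hj
  · exact subset_span ⟨e, Finset.mem_erase.2 ⟨heb.ne, he⟩, rfl⟩

theorem isExtActive_exchange (hb : b ∈ B) (hjb : j < b)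
    (h1 : v j ∈ span ℝ (v '' {e | e ∈ B ∧ e ≤ b}))
    (h2 : v j ∉ span ℝ (v '' {e | e ∈ B ∧ e < b})) {t : Fin N}
    (ht : t ∉ insert j (B.erase b)) (htB : t ∈ B ∨ isExtActive v B t) :
    isExtActive v (insert j (B.erase b)) t := by
  have hb' := mem_span_exchange_le hb hjb h1 h2
  refine ⟨ht, ?_⟩
  by_cases htb : t = b
  · exact htb ▸ hb'
  have htB' : t ∉ B := fun h ↦ ht (Finset.mem_insert_of_mem (Finset.mem_erase.2 ⟨htb, h⟩))
  refine span_le.2 ?_ (htB.resolve_left htB').2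
  rintro _ ⟨e, ⟨heB, het⟩, rfl⟩
  by_cases heb : e = b
  · subst heb
    refine span_mono (Set.image_mono ?_) hb'
    exact fun x hx ↦ ⟨hx.1, hx.2.trans het⟩
  · exact subset_span ⟨e, ⟨Finset.mem_insert_of_mem (Finset.mem_erase.2 ⟨heb, heB⟩), het⟩, rfl⟩

theorem forwardExchange_linearIndepOn_isExtActive (T : Set (Fin N)) :
    forwardExchange v
      {B | LinearIndepOn ℝ v (B : Set (Fin N)) ∧ ∀ t ∈ T, t ∈ B ∨ isExtActive v B t} := by
  rintro B ⟨hB, hT⟩ b hb j h1 h2 hj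
  by_cases hjB : j ∈ B
  · rw [eq_of_mem_of_mem_span_le_of_notMem_span_lt hB hjB h1 h2, Finset.insert_erase hb]
    exact ⟨hB, hT⟩
  have hjb := lt_of_not_isExtActive hjB h1 hj
  refine ⟨linearIndepOn_exchange hB hb hjB h1 h2, fun t ht ↦ ?_⟩
  by_cases ht' : t ∈ insert j (B.erase b)
  · exact Or.inl ht'
  · exact Or.inr (isExtActive_exchange hb hjb h1 h2 ht' (hT t ht))

end ForwardExchange

section Greedy

variable {n r : ℕ} (A : Fin n → Fin r → ℝ) (B0 : Fin r → Fin r → ℝ) (I : Finset (Fin n))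

open Classical in
theorem greedyExt_succ {k : ℕ} (hk : k < r) :
    greedyExt A B0 I (k + 1) =
      if Fin.append A B0 (Fin.natAdd n ⟨k, hk⟩) ∈
          span ℝ (Fin.append A B0 '' (greedyExt A B0 I k : Set (Fin (n + r))))
      then greedyExt A B0 I k else insert (Fin.natAdd n ⟨k, hk⟩) (greedyExt A B0 I k) := by
  rw [greedyExt, dif_pos hk]
  split_ifs <;> rfl

theorem greedyExt_subset_succ (k : ℕ) : greedyExt A B0 I k ⊆ greedyExt A B0 I (k + 1) := by
  rw [greedyExt]
  split_ifs <;> first | exact Finset.subset_insert _ _ | exact subset_rfl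

theorem greedyExt_mono : Monotone (greedyExt A B0 I) :=
  monotone_nat_of_le_succ (greedyExt_subset_succ A B0 I)

theorem val_lt_of_mem_greedyExt {k : ℕ} {e : Fin (n + r)} (he : e ∈ greedyExt A B0 I k) :
    (e : ℕ) < n + k := by
  induction k with
  | zero =>
    obtain ⟨i, -, rfl⟩ := Finset.mem_map.1 he
    simp
  | succ k ih =>
    rw [greedyExt] at he
    split_ifs at he
    · exact (ih he).trans (Nat.lt_succ_self _)
    · obtain rfl | he := Finset.mem_insert.1 he
      · simp
      · exact (ih he).trans (Nat.lt_succ_self _)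
    · exact (ih he).trans (Nat.lt_succ_self _)

theorem linearIndepOn_append_image_castAdd_iff (s : Set (Fin n)) :
    LinearIndepOn ℝ (Fin.append A B0) (Fin.castAdd r '' s) ↔ LinearIndepOn ℝ A s := by
  have hA : Fin.append A B0 ∘ Fin.castAdd r = A := funext (Fin.append_left A B0)
  refine ⟨fun h ↦ ?_, fun h ↦ LinearIndepOn.image_of_comp _ _ (by rwa [hA])⟩
  simpa only [hA] using h.comp_of_image (Fin.castAdd_injective n r).injOn

theorem linearIndepOn_greedyExt (hI : LinearIndepOn ℝ A (I : Set (Fin n))) (k : ℕ) :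
    LinearIndepOn ℝ (Fin.append A B0) (greedyExt A B0 I k : Set (Fin (n + r))) := by
  induction k with
  | zero =>
    rw [greedyExt, Finset.coe_map]
    exact (linearIndepOn_append_image_castAdd_iff A B0 _).2 hI
  | succ k ih =>
    by_cases hk : k < r
    · rw [greedyExt_succ A B0 I hk]
      split_ifs with hspan
      · exact ih
      · have hnot : Fin.natAdd n ⟨k, hk⟩ ∉ (greedyExt A B0 I k : Set (Fin (n + r))) :=
          fun h ↦ by simpa using val_lt_of_mem_greedyExt A B0 I h
        rw [Finset.coe_insert, linearIndepOn_insert hnot]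
        exact ⟨ih, hspan⟩
    · rwa [greedyExt, dif_neg hk]

theorem span_greedyExt_eq_top (hB0span : span ℝ (Set.range B0) = ⊤) :
    span ℝ (Fin.append A B0 '' (greedyExt A B0 I r : Set (Fin (n + r)))) = ⊤ := by
  rw [eq_top_iff, ← hB0span, span_le]
  rintro _ ⟨k, rfl⟩
  have hstep : Fin.append A B0 (Fin.natAdd n k) ∈
      span ℝ (Fin.append A B0 '' (greedyExt A B0 I (k + 1) : Set (Fin (n + r)))) := by
    have hsub := greedyExt_subset_succ A B0 I k
    rw [greedyExt_succ A B0 I k.isLt] at hsub ⊢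
    split_ifs with hspan
    · exact hspan
    · exact subset_span ⟨_, Finset.mem_insert_self _ _, rfl⟩
  rw [← Fin.append_right A B0 k]
  exact span_mono (Set.image_mono (Finset.coe_subset.2 (greedyExt_mono A B0 I k.isLt))) hstep

theorem natAdd_mem_greedyExt_or_isExtActive (k : Fin r) :
    Fin.natAdd n k ∈ greedyExt A B0 I r ∨
      isExtActive (Fin.append A B0) (greedyExt A B0 I r) (Fin.natAdd n k) := by
  by_cases hspan : Fin.append A B0 (Fin.natAdd n k) ∈
      span ℝ (Fin.append A B0 '' (greedyExt A B0 I k : Set (Fin (n + r))))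
  · refine or_iff_not_imp_left.2 fun hk ↦ ⟨hk, span_mono (Set.image_mono ?_) hspan⟩
    exact fun e he ↦ ⟨greedyExt_mono A B0 I k.isLt.le he,
      Fin.le_def.2 (val_lt_of_mem_greedyExt A B0 I he).le⟩
  · refine Or.inl (greedyExt_mono A B0 I k.isLt ?_)
    rw [greedyExt_succ A B0 I k.isLt, if_neg hspan]
    exact Finset.mem_insert_self _ _

theorem greedyExt_preimage_castAdd_eq_filter {B : Finset (Fin (n + r))}
    (hB : LinearIndepOn ℝ (Fin.append A B0) (B : Set (Fin (n + r))))
    (hact : ∀ k : Fin r, Fin.natAdd n k ∈ B ∨ isExtActive (Fin.append A B0) B (Fin.natAdd n k))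
    {k : ℕ} (hk : k ≤ r) :
    greedyExt A B0 {i | Fin.castAdd r i ∈ B} k = {e ∈ B | e.val < n + k} := by
  induction k with
  | zero =>
    ext e
    induction e using Fin.addCases with
    | left i => simp [greedyExt]
    | right i =>
      simp only [greedyExt, Finset.mem_map, Finset.mem_filter, Finset.mem_univ, true_and,
        Fin.coe_castAddEmb, Fin.ext_iff, Fin.val_castAdd, Fin.val_natAdd]
      omega
  | succ k ih =>
    have hkr : k < r := hk
    rw [greedyExt_succ A B0 _ hkr, ih hkr.le]
    rcases hact ⟨k, hkr⟩ with htB | ⟨htB, hspan⟩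
    · rw [if_neg (hB.notMem_span_image_of_subset htB (fun e he ↦ (Finset.mem_filter.1 he).1)
        (by simp))]
      ext e
      simp only [Finset.mem_insert, Finset.mem_filter]
      constructor
      · rintro (rfl | ⟨he, hlt⟩)
        exacts [⟨htB, by simp⟩, ⟨he, by omega⟩]
      · rintro ⟨he, hlt⟩
        rcases Nat.lt_succ_iff_lt_or_eq.1 hlt with hlt | heq
        exacts [Or.inr ⟨he, hlt⟩, Or.inl (Fin.ext heq)]
    · have hne : ∀ e ∈ B, e.val ≠ n + k := fun e he heq ↦
        htB ((Fin.ext heq : e = Fin.natAdd n ⟨k, hkr⟩) ▸ he)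
      have hset : {e | e ∈ B ∧ e ≤ Fin.natAdd n ⟨k, hkr⟩} =
          (({e ∈ B | e.val < n + k} : Finset _) : Set (Fin (n + r))) := by
        rw [Finset.coe_filter]
        exact Set.ext fun e ↦ and_congr_right fun he ↦ (Fin.le_def.trans
          ⟨fun h ↦ lt_of_le_of_ne h (hne e he), le_of_lt⟩)
      rw [if_pos (hset ▸ hspan)]
      ext e
      simp only [Finset.mem_filter]
      exact and_congr_right fun he ↦
        ⟨fun h ↦ by omega, fun h ↦ lt_of_le_of_ne (Nat.lt_succ_iff.1 h) (hne e he)⟩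

theorem linearIndepOn_preimage_castAdd {B : Finset (Fin (n + r))}
    (hB : LinearIndepOn ℝ (Fin.append A B0) (B : Set (Fin (n + r)))) :
    LinearIndepOn ℝ A (({i | Fin.castAdd r i ∈ B} : Finset (Fin n)) : Set (Fin n)) := by
  refine (linearIndepOn_append_image_castAdd_iff A B0 _).1 (hB.mono ?_)
  rintro _ ⟨i, hi, rfl⟩
  simpa using hi

theorem exists_greedyExt_eq_iff (B : Finset (Fin (n + r))) :
    (∃ I : Finset (Fin n), LinearIndepOn ℝ A (I : Set (Fin n)) ∧ B = greedyExt A B0 I r) ↔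
      LinearIndepOn ℝ (Fin.append A B0) (B : Set (Fin (n + r))) ∧
        ∀ t ∈ Set.range (Fin.natAdd n), t ∈ B ∨ isExtActive (Fin.append A B0) B t := by
  rw [Set.forall_mem_range]
  constructor
  · rintro ⟨I, hI, rfl⟩
    exact ⟨linearIndepOn_greedyExt A B0 I hI r, natAdd_mem_greedyExt_or_isExtActive A B0 I⟩
  · rintro ⟨hB, hact⟩
    refine ⟨_, linearIndepOn_preimage_castAdd A B0 hB, ?_⟩
    rw [greedyExt_preimage_castAdd_eq_filter A B0 hB hact le_rfl,
      Finset.filter_true_of_mem fun e _ ↦ e.isLt]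

end Greedy

theorem statement18_general {n r : ℕ} (A : Fin n → Fin r → ℝ) (B0 : Fin r → Fin r → ℝ)
    (hB0span : Submodule.span ℝ (Set.range B0) = ⊤) :
    (∀ I : Finset (Fin n), LinearIndependent ℝ ((I : Set (Fin n)).restrict A) →
      greedyExt A B0 I r ∈ basesOn (Fin.append A B0) Finset.univ) ∧
    forwardExchange (Fin.append A B0)
      {B | ∃ I : Finset (Fin n), LinearIndependent ℝ ((I : Set (Fin n)).restrict A) ∧
        B = greedyExt A B0 I r} := by
  refine ⟨fun I hI ↦ ⟨Finset.subset_univ _, linearIndepOn_greedyExt A B0 I hI r,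
    span_greedyExt_eq_top A B0 I hB0span⟩, ?_⟩
  convert forwardExchange_linearIndepOn_isExtActive (Set.range (Fin.natAdd n)) using 1
  exact Set.ext (exists_greedyExt_eq_iff A B0)

/-- every greedy extension `ex(I) = G_r` of a linearly independent
sublist `I ⊆ A` is a basis of `ℝ^r` selected from `X = (A, B_0)`, and the set of
external bases `𝔅₊(A,B_0) = {ex(I)}` has the forward exchange property. -/
theorem statement18 {n r : ℕ} (A : Fin n → Fin r → ℝ) (B0 : Fin r → Fin r → ℝ)
    (hB0indep : LinearIndependent ℝ B0)
    (hB0span : Submodule.span ℝ (Set.range B0) = ⊤) :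
    (∀ I : Finset (Fin n), LinearIndependent ℝ ((I : Set (Fin n)).restrict A) →
      greedyExt A B0 I r ∈ basesOn (Fin.append A B0) Finset.univ) ∧
    forwardExchange (Fin.append A B0)
      {B | ∃ I : Finset (Fin n), LinearIndependent ℝ ((I : Set (Fin n)).restrict A) ∧
        B = greedyExt A B0 I r} :=
  statement18_general A B0 hB0span
end

section
/- Let A be a finite ordered list of vectors spanning ℝ^r. For B ∈ 𝔅(A), an element b ∈ B is internally active in B if b is the maximum (with respect to the list order) of the set of elements of A not lying in span(B∖b). Then the set of internal bases 𝔅_-(A) := {B ∈ 𝔅(A) : no element of B is internally active in B} has the forward exchange property. -/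
/-- `b ∈ B` is internally active in `B`: `b` is the maximum element of the set of
elements of the list not lying in `span(B∖b)`. -/
def isIntActive {r N : ℕ} (A : Fin N → Fin r → ℝ) (B : Finset (Fin N)) (b : Fin N) : Prop :=
  b ∈ B ∧
    A b ∉ Submodule.span ℝ (A '' ((B.erase b : Finset (Fin N)) : Set (Fin N))) ∧
    ∀ j : Fin N,
      A j ∉ Submodule.span ℝ (A '' ((B.erase b : Finset (Fin N)) : Set (Fin N))) → j ≤ b

/-!
Let `B' = B - b + j`. Since `v j` has a nonzero `b`-coordinate in `B`, `B'` is a basis, and as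
`j` is not externally active, `j ≤ b`. An element `c` is not internally active in a basis iff
some `y > c` lies outside the hyperplane spanned by the basis minus `c`. For `c = j` the witness
of `b` in `B` works. For `c ∈ B - b`, the hyperplane of `B'` at `c` lies inside that of `B` (so
the witness of `c` in `B` works) unless `v j ∉ span (B - c)`; that forces `c < b` because
`v j ∈ span {e ∈ B | e ≤ b}`, and by Steinitz exchange `v b ∉ span (B' - c)`, so `b` is a
witness.
-/

open Finset Submodule

section Exchange

variable {ι M : Type*} [DecidableEq ι] [AddCommGroup M] [Module ℝ M] {v : ι → M}
  {B : Finset ι} {b c j : ι}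

lemma LinearIndepOn.notMem_span_image_erase (hB : LinearIndepOn ℝ v B) (hb : b ∈ B) :
    v b ∉ span ℝ (v '' ↑(B.erase b)) := by
  rw [← insert_erase hb, coe_insert] at hB
  exact ((linearIndepOn_insert (by simp)).1 hB).2

lemma span_image_erase_insert_erase_le (hcj : c ≠ j) (hj : v j ∈ span ℝ (v '' ↑(B.erase c))) :
    span ℝ (v '' ↑((insert j (B.erase b)).erase c)) ≤ span ℝ (v '' ↑(B.erase c)) := by
  rw [erase_insert_of_ne hcj.symm, coe_insert, Set.image_insert_eq, span_le,
    Set.insert_subset_iff]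
  refine ⟨hj, (Set.image_mono ?_).trans subset_span⟩
  exact coe_subset.2 (erase_subset_erase c (erase_subset b B))

lemma LinearIndepOn.mem_span_image_erase_of_exchange (hB : LinearIndepOn ℝ v B) (hb : b ∈ B)
    (hcb : c ≠ b) (hcj : c ≠ j) (h : v b ∈ span ℝ (v '' ↑((insert j (B.erase b)).erase c))) :
    v j ∈ span ℝ (v '' ↑(B.erase c)) := by
  have hbc : b ∈ B.erase c := mem_erase.2 ⟨hcb.symm, hb⟩
  have hb' : v b ∉ span ℝ (v '' ↑((B.erase c).erase b)) :=
    (hB.mono (coe_subset.2 (erase_subset c B))).notMem_span_image_erase hbc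
  rw [erase_insert_of_ne hcj.symm, coe_insert, Set.image_insert_eq, erase_right_comm] at h
  have := mem_span_insert_exchange h hb'
  rwa [← Set.image_insert_eq, ← coe_insert, insert_erase hbc] at this

end Exchange

section Bases

variable {N : ℕ} {M : Type*} [AddCommGroup M] [Module ℝ M] {v : Fin N → M}
  {G B : Finset (Fin N)} {b j : Fin N}

lemma insert_erase_mem_basesOn (hB : B ∈ basesOn v G) (hb : b ∈ B) (hjG : j ∈ G)
    (hj : v j ∉ span ℝ (v '' ↑(B.erase b))) : insert j (B.erase b) ∈ basesOn v G := by
  obtain ⟨hBG, hind, hspan⟩ := hB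
  have hjB : j ∉ B.erase b := fun h => hj (subset_span (Set.mem_image_of_mem v h))
  refine ⟨insert_subset hjG ((erase_subset b B).trans hBG), ?_, ?_⟩
  · rw [coe_insert]
    exact (linearIndepOn_insert (mem_coe.not.2 hjB)).2
      ⟨LinearIndepOn.mono hind (coe_subset.2 (erase_subset b B)), hj⟩
  · have hjspan : v j ∈ span ℝ (insert (v b) (v '' ↑(B.erase b))) := by
      rw [← Set.image_insert_eq, ← coe_insert, insert_erase hb, hspan]
      exact mem_top
    have hbspan := mem_span_insert_exchange hjspan hj
    rw [eq_top_iff, ← hspan, span_le, coe_insert, Set.image_insert_eq]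
    rintro _ ⟨e, he, rfl⟩
    by_cases heb : e = b
    · exact heb ▸ hbspan
    · exact subset_span (Set.mem_insert_of_mem _ ⟨e, mem_erase.2 ⟨heb, he⟩, rfl⟩)

lemma LinearIndepOn.notMem_span_image_erase_of_notMem_span_lt (hB : LinearIndepOn ℝ v B)
    (hb : b ∈ B) (hj_le : v j ∈ span ℝ (v '' {e | e ∈ B ∧ e ≤ b}))
    (hj_lt : v j ∉ span ℝ (v '' {e | e ∈ B ∧ e < b})) :
    v j ∉ span ℝ (v '' ↑(B.erase b)) := by
  have hle : {e | e ∈ B ∧ e ≤ b} = insert b {e | e ∈ B ∧ e < b} := by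
    ext e
    simp only [Set.mem_ofPred_eq, Set.mem_insert_iff, le_iff_lt_or_eq]
    constructor
    · rintro ⟨he, hlt | rfl⟩ <;> simp_all
    · rintro (rfl | ⟨he, hlt⟩) <;> simp_all
  rw [hle, Set.image_insert_eq] at hj_le
  have hbspan := mem_span_insert_exchange hj_le hj_lt
  intro hj
  refine hB.notMem_span_image_erase hb (span_le.2 ?_ hbspan)
  refine Set.insert_subset_iff.2 ⟨hj, (Set.image_mono ?_).trans subset_span⟩
  rintro e ⟨he, hlt⟩
  exact mem_erase.2 ⟨hlt.ne, he⟩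

lemma le_of_not_isExtActive (hjB : j ∉ B.erase b)
    (hj_le : v j ∈ span ℝ (v '' {e | e ∈ B ∧ e ≤ b})) (hj : ¬ isExtActive v B j) : j ≤ b := by
  by_contra! hbj
  refine hj ⟨fun hjB' => hjB (mem_erase.2 ⟨hbj.ne', hjB'⟩), span_mono ?_ hj_le⟩
  exact Set.image_mono fun e he => ⟨he.1, he.2.trans hbj.le⟩

end Bases

section Internal

variable {r N : ℕ} {A : Fin N → Fin r → ℝ} {B : Finset (Fin N)} {b c j : Fin N}

lemma not_isIntActive_iff (hB : LinearIndepOn ℝ A B) (hc : c ∈ B) :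
    ¬ isIntActive A B c ↔ ∃ y, c < y ∧ A y ∉ span ℝ (A '' ↑(B.erase c)) := by
  simp only [isIntActive, hc, hB.notMem_span_image_erase hc, not_false_eq_true, true_and,
    not_forall, not_le]
  exact ⟨fun ⟨y, hy, hcy⟩ => ⟨y, hcy, hy⟩, fun ⟨y, hcy, hy⟩ => ⟨y, hy, hcy⟩⟩

lemma not_isIntActive_insert_erase (hB : LinearIndepOn ℝ A B)
    (hB' : LinearIndepOn ℝ A ↑(insert j (B.erase b))) (hBint : ∀ c ∈ B, ¬ isIntActive A B c)
    (hb : b ∈ B) (hjb : j ≤ b) (hjB : j ∉ B.erase b)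
    (hj_le : A j ∈ span ℝ (A '' {e | e ∈ B ∧ e ≤ b})) (hc : c ∈ insert j (B.erase b)) :
    ¬ isIntActive A (insert j (B.erase b)) c := by
  rw [not_isIntActive_iff hB' hc]
  rcases mem_insert.1 hc with rfl | hc
  · obtain ⟨y, hby, hy⟩ := (not_isIntActive_iff hB hb).1 (hBint b hb)
    exact ⟨y, hjb.trans_lt hby, by rwa [erase_insert hjB]⟩
  obtain ⟨hcb, hcB⟩ := mem_erase.1 hc
  have hcj : c ≠ j := fun h => hjB (h ▸ hc)
  obtain ⟨w, hcw, hw⟩ := (not_isIntActive_iff hB hcB).1 (hBint c hcB)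
  suffices A j ∈ span ℝ (A '' ↑(B.erase c)) ∨
      c < b ∧ A b ∉ span ℝ (A '' ↑((insert j (B.erase b)).erase c)) by
    rcases this with h | h
    · exact ⟨w, hcw, fun hw' => hw (span_image_erase_insert_erase_le hcj h hw')⟩
    · exact ⟨b, h⟩
  rcases hcb.lt_or_gt with hcb' | hbc
  · by_cases h : A b ∈ span ℝ (A '' ↑((insert j (B.erase b)).erase c))
    · exact .inl (hB.mem_span_image_erase_of_exchange hb hcb hcj h)
    · exact .inr ⟨hcb', h⟩
  · refine .inl (span_mono (Set.image_mono fun e he => ?_) hj_le)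
    exact mem_erase.2 ⟨(he.2.trans_lt hbc).ne, he.1⟩

end Internal

theorem statement19_general {r N : ℕ} (A : Fin N → Fin r → ℝ) :
    forwardExchange A
      {B ∈ basesOn A Finset.univ | ∀ b ∈ B, ¬ isIntActive A B b} := by
  rintro B ⟨hB, hBint⟩ b hb j hj_le hj_lt hj_ext
  have hind : LinearIndepOn ℝ A ↑B := hB.2.1
  have hj := hind.notMem_span_image_erase_of_notMem_span_lt hb hj_le hj_lt
  have hB' := insert_erase_mem_basesOn hB hb (mem_univ j) hj
  have hjB : j ∉ B.erase b := fun h => hj (subset_span (Set.mem_image_of_mem A h))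
  have hjb := le_of_not_isExtActive hjB hj_le hj_ext
  exact ⟨hB', fun c hc => not_isIntActive_insert_erase hind hB'.2.1 hBint hb hjb hjB hj_le hc⟩

/-- the set of internal bases has the forward exchange property. -/
theorem statement19 {r N : ℕ} (A : Fin N → Fin r → ℝ)
    (hA : Submodule.span ℝ (Set.range A) = ⊤) :
    forwardExchange A
      {B ∈ basesOn A Finset.univ | ∀ b ∈ B, ¬ isIntActive A B b} :=
  statement19_general A
end
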